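/- arXiv:2402.13403 — 6 statements merged into one kernel-verified Lean document; each statement's English description precedes it below -/
import Mathlib

section
/- If G is a triangle-free simple graph on n vertices with maximum degree Δ, then G has at most Δ(n−Δ) edges. -/
open SimpleGraph Finset

/-- If `G` is a triangle-free simple graph on `n` vertices with maximum
degree `Δ`, then `G` has at most `Δ(n − Δ)` edges. -/
theorem triangleFree_card_edges_le_maxDegree_mul {V : Type*} [Fintype V]
    (G : SimpleGraph V) [DecidableRel G.Adj] (hG : G.CliqueFree 3) :
    G.edgeFinset.card ≤ G.maxDegree * (Fintype.card V - G.maxDegree) := by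
  classical
  rcases isEmpty_or_nonempty V with hV | hV
  · simp [Finset.card_eq_zero.mpr (Finset.eq_empty_of_isEmpty _)]
  obtain ⟨v, hv⟩ := G.exists_maximal_degree_vertex
  set N := G.neighborFinset v with hN
  have hNcard : N.card = G.maxDegree := by rw [hN, card_neighborFinset_eq_degree, hv]
  -- every edge has an endpoint outside N
  have hsub : G.edgeFinset ⊆ Nᶜ.biUnion (fun u => G.incidenceFinset u) := by
    intro e he
    rw [mem_edgeFinset] at he
    induction e with
    | h a b =>
      have hab : G.Adj a b := he
      have : a ∉ N ∨ b ∉ N := by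
        by_contra h
        push_neg at h
        obtain ⟨ha, hb⟩ := h
        rw [hN, mem_neighborFinset] at ha hb
        exact hG {v, a, b} ⟨by
          rw [Finset.coe_insert, Finset.coe_insert, Finset.coe_singleton]
          intro x hx y hy hxy
          rcases hx with rfl | rfl | rfl <;> rcases hy with rfl | rfl | rfl <;>
            first | exact absurd rfl hxy | assumption | exact ha.symm |
              exact hb.symm | exact hab.symm,
          by
            rw [Finset.card_insert_of_notMem, Finset.card_insert_of_notMem,
              Finset.card_singleton]
            · simp only [Finset.mem_singleton]; exact hab.ne
            · simp only [Finset.mem_insert, Finset.mem_singleton]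
              push_neg
              exact ⟨ha.ne, hb.ne⟩⟩
      rcases this with h | h
      · exact Finset.mem_biUnion.mpr ⟨a, Finset.mem_compl.mpr h,
          (G.mem_incidenceFinset _ _).mpr ⟨hab, Sym2.mem_mk_left a b⟩⟩
      · exact Finset.mem_biUnion.mpr ⟨b, Finset.mem_compl.mpr h,
          (G.mem_incidenceFinset _ _).mpr ⟨hab, Sym2.mem_mk_right a b⟩⟩
  calc G.edgeFinset.card ≤ (Nᶜ.biUnion (fun u => G.incidenceFinset u)).card :=
        Finset.card_le_card hsub
    _ ≤ ∑ u ∈ Nᶜ, (G.incidenceFinset u).card := Finset.card_biUnion_le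
    _ = ∑ u ∈ Nᶜ, G.degree u := by
        refine Finset.sum_congr rfl fun u _ => ?_
        exact G.card_incidenceFinset_eq_degree u
    _ ≤ ∑ u ∈ Nᶜ, G.maxDegree := Finset.sum_le_sum fun u _ => G.degree_le_maxDegree u
    _ = Nᶜ.card * G.maxDegree := by rw [Finset.sum_const, smul_eq_mul]
    _ = G.maxDegree * (Fintype.card V - G.maxDegree) := by
        rw [Finset.card_compl, hNcard, Nat.mul_comm]
end

section
/- Let f : ℕ × ℕ → ℝ be monotone (x ≤ x' and y ≤ y' implies f(x,y) ≤ f(x',y')) with nonnegative values, and define Q(G) = Σ_{uv ∈ E(G)} f(d(u), d(v)). Then for every triangle-free graph G on n vertices there exists m with 0 ≤ m ≤ n such that Q(G) ≤ Q(K_{m,n−m}). -/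
open SimpleGraph Finset

attribute [local instance] Classical.propDecidable

/-- The topological index `Q(G) = ∑_{uv ∈ E(G)} f(d(u), d(v))`, written as half of the sum
over ordered adjacent pairs (for symmetric `f` this is exactly the sum over unordered
edges). -/
noncomputable def Qindex {V : Type*} [Fintype V] (f : ℕ → ℕ → ℝ) (G : SimpleGraph V) : ℝ :=
  (∑ u : V, ∑ v : V, if G.Adj u v then f (G.degree u) (G.degree v) else 0) / 2

/-- In a triangle-free graph, adjacent vertices have disjoint neighborhoods, so the sum of
their degrees is at most the number of vertices. -/
lemma degree_add_degree_le_card {V : Type*} [Fintype V] {G : SimpleGraph V}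
    (hG : G.CliqueFree 3) {u v : V} (h : G.Adj u v) :
    G.degree u + G.degree v ≤ Fintype.card V := by
  classical
  have hdisj : Disjoint (G.neighborFinset u) (G.neighborFinset v) := by
    rw [Finset.disjoint_left]
    intro w hwu hwv
    rw [SimpleGraph.mem_neighborFinset] at hwu hwv
    exact (SimpleGraph.is3Clique_triple_iff.2 ⟨h, hwu, hwv⟩).not_cliqueFree hG
  rw [← SimpleGraph.card_neighborFinset_eq_degree, ← SimpleGraph.card_neighborFinset_eq_degree,
    ← Finset.card_union_of_disjoint hdisj]
  exact Finset.card_le_univ _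

lemma cbp_degree_inl {α β : Type*} [Fintype α] [Fintype β] (a : α) :
    (completeBipartiteGraph α β).degree (Sum.inl a) = Fintype.card β := by
  classical
  rw [← SimpleGraph.card_neighborFinset_eq_degree]
  have : (completeBipartiteGraph α β).neighborFinset (Sum.inl a) =
      Finset.univ.map ⟨Sum.inr, Sum.inr_injective⟩ := by
    ext w
    cases w <;> simp
  rw [this, Finset.card_map, Finset.card_univ]

lemma cbp_degree_inr {α β : Type*} [Fintype α] [Fintype β] (b : β) :
    (completeBipartiteGraph α β).degree (Sum.inr b) = Fintype.card α := by
  classical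
  rw [← SimpleGraph.card_neighborFinset_eq_degree]
  have : (completeBipartiteGraph α β).neighborFinset (Sum.inr b) =
      Finset.univ.map ⟨Sum.inl, Sum.inl_injective⟩ := by
    ext w
    cases w <;> simp
  rw [this, Finset.card_map, Finset.card_univ]

lemma Qindex_completeBipartite (f : ℕ → ℕ → ℝ) (hsym : ∀ x y : ℕ, f x y = f y x) (m k : ℕ) :
    Qindex f (completeBipartiteGraph (Fin m) (Fin k)) = (m : ℝ) * k * f m k := by
  unfold Qindex
  rw [Fintype.sum_sum_type]
  have h1 : ∀ a : Fin m,
      (∑ v : Fin m ⊕ Fin k, if (completeBipartiteGraph (Fin m) (Fin k)).Adj (Sum.inl a) v then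
        f ((completeBipartiteGraph (Fin m) (Fin k)).degree (Sum.inl a))
          ((completeBipartiteGraph (Fin m) (Fin k)).degree v) else 0) = (k : ℝ) * f k m := by
    intro a
    rw [Fintype.sum_sum_type]
    simp [cbp_degree_inl, cbp_degree_inr, mul_comm]
  have h2 : ∀ b : Fin k,
      (∑ v : Fin m ⊕ Fin k, if (completeBipartiteGraph (Fin m) (Fin k)).Adj (Sum.inr b) v then
        f ((completeBipartiteGraph (Fin m) (Fin k)).degree (Sum.inr b))
          ((completeBipartiteGraph (Fin m) (Fin k)).degree v) else 0) = (m : ℝ) * f m k := by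
    intro b
    rw [Fintype.sum_sum_type]
    simp [cbp_degree_inl, cbp_degree_inr, mul_comm]
  rw [Finset.sum_congr rfl fun a _ => h1 a, Finset.sum_congr rfl fun b _ => h2 b]
  simp only [Finset.sum_const, Finset.card_univ, Fintype.card_fin, nsmul_eq_mul]
  rw [hsym k m]
  ring

/-- For a symmetric monotone nonnegative `f : ℕ × ℕ → ℝ` and
`Q(G) = ∑_{uv ∈ E(G)} f(d(u), d(v))`, every triangle-free graph `G` on `n` vertices
satisfies `Q(G) ≤ Q(K_{m,n−m})` for some `0 ≤ m ≤ n`. -/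
theorem Qindex_le_completeBipartite_of_triangleFree {V : Type*} [Fintype V]
    (f : ℕ → ℕ → ℝ)
    (hmono : ∀ x x' y y' : ℕ, x ≤ x' → y ≤ y' → f x y ≤ f x' y')
    (hnonneg : ∀ x y : ℕ, 0 ≤ f x y)
    (hsym : ∀ x y : ℕ, f x y = f y x)
    (G : SimpleGraph V) (hG : G.CliqueFree 3) :
    ∃ m ≤ Fintype.card V,
      Qindex f G ≤
        Qindex f (completeBipartiteGraph (Fin m) (Fin (Fintype.card V - m))) := by
  classical
  set n := Fintype.card V with hn
  obtain ⟨m, hm_mem, hmax⟩ := Finset.exists_max_image (Finset.range (n + 1))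
    (fun j => (j : ℝ) * ((n - j : ℕ) : ℝ) * f j (n - j)) ⟨0, by simp⟩
  have hm_le : m ≤ n := Nat.lt_succ_iff.mp (Finset.mem_range.mp hm_mem)
  refine ⟨m, hm_le, ?_⟩
  set M : ℝ := (m : ℝ) * ((n - m : ℕ) : ℝ) * f m (n - m) with hM
  have hQK : Qindex f (completeBipartiteGraph (Fin m) (Fin (n - m))) = M := by
    rw [Qindex_completeBipartite f hsym]
  rw [hQK]
  have hM0 : 0 ≤ M := by
    have := hmax 0 (by simp)
    simpa using this
  -- key per-edge bound (in the ordered form `a ≤ b`)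
  have key : ∀ a b : ℕ, 1 ≤ a → a ≤ b → a + b ≤ n →
      f a b ≤ M / n * (1 / a + 1 / b) := by
    intro a b ha hab habn
    have hbn : b ≤ n - a := Nat.le_sub_of_add_le (by omega)
    have han : a ≤ n := by omega
    have hb1 : 1 ≤ b := le_trans ha hab
    have hC1 : 1 ≤ n - a := le_trans hb1 hbn
    have step1 : f a b ≤ f a (n - a) := hmono a a b (n - a) le_rfl hbn
    have step2 : (a : ℝ) * ((n - a : ℕ) : ℝ) * f a (n - a) ≤ M :=
      hmax a (Finset.mem_range.mpr (by omega))
    have hA : (1 : ℝ) ≤ (a : ℝ) := by exact_mod_cast ha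
    have hB : (1 : ℝ) ≤ (b : ℝ) := by exact_mod_cast hb1
    have hC : (1 : ℝ) ≤ ((n - a : ℕ) : ℝ) := by exact_mod_cast hC1
    have hBC : (b : ℝ) ≤ ((n - a : ℕ) : ℝ) := by exact_mod_cast hbn
    have hACn : (a : ℝ) + ((n - a : ℕ) : ℝ) = (n : ℝ) := by
      have : a + (n - a) = n := by omega
      exact_mod_cast this
    have hApos : (0 : ℝ) < a := by linarith
    have hBpos : (0 : ℝ) < b := by linarith
    have hCpos : (0 : ℝ) < ((n - a : ℕ) : ℝ) := by linarith
    have hNpos : (0 : ℝ) < (n : ℝ) := by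
      have : (0 : ℝ) < (a : ℝ) + ((n - a : ℕ) : ℝ) := by linarith
      linarith [hACn]
    have step3 : f a (n - a) ≤ M / ((a : ℝ) * ((n - a : ℕ) : ℝ)) := by
      rw [le_div_iff₀ (by positivity)]
      calc f a (n - a) * ((a : ℝ) * ((n - a : ℕ) : ℝ))
          = (a : ℝ) * ((n - a : ℕ) : ℝ) * f a (n - a) := by ring
        _ ≤ M := step2
    have hA0 : (a : ℝ) ≠ 0 := ne_of_gt hApos
    have hC0 : ((n - a : ℕ) : ℝ) ≠ 0 := ne_of_gt hCpos
    have hN0 : (n : ℝ) ≠ 0 := ne_of_gt hNpos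
    have step4 : M / ((a : ℝ) * ((n - a : ℕ) : ℝ))
        = M / n * (1 / a + 1 / ((n - a : ℕ) : ℝ)) := by
      have h1 : (1 : ℝ) * ((n - a : ℕ) : ℝ) + (a : ℝ) * 1 = (n : ℝ) := by
        rw [one_mul, mul_one, add_comm]; exact hACn
      rw [div_add_div _ _ hA0 hC0, h1, div_mul_div_comm, mul_comm M (n : ℝ),
        mul_div_mul_left _ _ hN0]
    have step5 : M / n * (1 / a + 1 / ((n - a : ℕ) : ℝ)) ≤ M / n * (1 / a + 1 / b) := by
      apply mul_le_mul_of_nonneg_left _ (by positivity)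
      have : (1 : ℝ) / ((n - a : ℕ) : ℝ) ≤ 1 / b := by
        apply one_div_le_one_div_of_le hBpos hBC
      linarith
    calc f a b ≤ f a (n - a) := step1
      _ ≤ M / ((a : ℝ) * ((n - a : ℕ) : ℝ)) := step3
      _ = M / n * (1 / a + 1 / ((n - a : ℕ) : ℝ)) := step4
      _ ≤ M / n * (1 / a + 1 / b) := step5
  -- the per-edge bound without the ordering assumption
  have key' : ∀ u v : V, G.Adj u v →
      f (G.degree u) (G.degree v) ≤ M / n * (1 / (G.degree u) + 1 / (G.degree v)) := by
    intro u v huv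
    have hdu : 1 ≤ G.degree u := by
      rw [Nat.one_le_iff_ne_zero, ← Nat.pos_iff_ne_zero, G.degree_pos_iff_exists_adj]
      exact ⟨v, huv⟩
    have hdv : 1 ≤ G.degree v := by
      rw [Nat.one_le_iff_ne_zero, ← Nat.pos_iff_ne_zero, G.degree_pos_iff_exists_adj]
      exact ⟨u, huv.symm⟩
    have hsum : G.degree u + G.degree v ≤ n := degree_add_degree_le_card hG huv
    rcases le_total (G.degree u) (G.degree v) with hle | hle
    · exact key _ _ hdu hle hsum
    · have := key _ _ hdv hle (by omega)
      rw [hsym]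
      linarith [this]
  -- now sum the bound
  have hn0 : n = 0 ∨ 1 ≤ n := Nat.eq_zero_or_pos n
  rcases hn0 with h0 | hn1
  · -- no vertices: Q(G) = 0
    have : IsEmpty V := Fintype.card_eq_zero_iff.mp h0
    unfold Qindex
    rw [Finset.sum_of_isEmpty]
    simpa using hM0
  · have hNpos : (0 : ℝ) < (n : ℝ) := by exact_mod_cast hn1
    unfold Qindex
    rw [div_le_iff₀ (by norm_num : (0:ℝ) < 2)]
    have hbound : (∑ u : V, ∑ v : V, if G.Adj u v then f (G.degree u) (G.degree v) else 0)
        ≤ ∑ u : V, ∑ v : V,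
          ((if G.Adj u v then M / n * (1 / (G.degree u)) else 0)
          + (if G.Adj u v then M / n * (1 / (G.degree v)) else 0)) := by
      apply Finset.sum_le_sum
      intro u _
      apply Finset.sum_le_sum
      intro v _
      by_cases h : G.Adj u v
      · simp only [h, if_true]
        have := key' u v h
        rw [mul_add] at this
        exact this
      · simp [h]
    have hT1 : ∀ u : V, (∑ v : V, if G.Adj u v then M / n * (1 / (G.degree u)) else 0)
        ≤ M / n := by
      intro u
      have : (∑ v : V, if G.Adj u v then M / n * (1 / (G.degree u)) else 0)
          = (G.degree u : ℝ) * (M / n * (1 / (G.degree u))) := by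
        rw [← Finset.sum_filter]
        rw [Finset.sum_const]
        rw [← SimpleGraph.neighborFinset_eq_filter, SimpleGraph.card_neighborFinset_eq_degree]
        rw [nsmul_eq_mul]
      rw [this]
      by_cases hd : G.degree u = 0
      · simp [hd]
        positivity
      · have hdpos : (0 : ℝ) < (G.degree u : ℝ) := by
          exact_mod_cast Nat.pos_of_ne_zero hd
        rw [show (G.degree u : ℝ) * (M / n * (1 / (G.degree u))) = M / n * ((G.degree u : ℝ) / (G.degree u)) by ring]
        rw [div_self (ne_of_gt hdpos), mul_one]
    have hT2 : ∀ v : V, (∑ u : V, if G.Adj u v then M / n * (1 / (G.degree v)) else 0)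
        ≤ M / n := by
      intro v
      have heq : (∑ u : V, if G.Adj u v then M / n * (1 / (G.degree v)) else 0)
          = (∑ u : V, if G.Adj v u then M / n * (1 / (G.degree v)) else 0) := by
        apply Finset.sum_congr rfl
        intro u _
        rw [SimpleGraph.adj_comm]
      rw [heq]
      exact hT1 v
    have hfinal : (∑ u : V, ∑ v : V,
          ((if G.Adj u v then M / n * (1 / (G.degree u)) else 0)
          + (if G.Adj u v then M / n * (1 / (G.degree v)) else 0))) ≤ 2 * M := by
      have hsplit : (∑ u : V, ∑ v : V,
          ((if G.Adj u v then M / n * (1 / (G.degree u)) else 0)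
          + (if G.Adj u v then M / n * (1 / (G.degree v)) else 0)))
          = (∑ u : V, ∑ v : V, if G.Adj u v then M / n * (1 / (G.degree u)) else 0)
          + (∑ u : V, ∑ v : V, if G.Adj u v then M / n * (1 / (G.degree v)) else 0) := by
        rw [← Finset.sum_add_distrib]
        apply Finset.sum_congr rfl
        intro u _
        rw [← Finset.sum_add_distrib]
      rw [hsplit]
      have hA : (∑ u : V, ∑ v : V, if G.Adj u v then M / n * (1 / (G.degree u)) else 0)
          ≤ (n : ℝ) * (M / n) := by
        calc (∑ u : V, ∑ v : V, if G.Adj u v then M / n * (1 / (G.degree u)) else 0)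
            ≤ ∑ _u : V, M / n := Finset.sum_le_sum fun u _ => hT1 u
          _ = (n : ℝ) * (M / n) := by
              rw [Finset.sum_const, Finset.card_univ, nsmul_eq_mul, hn]
      have hB : (∑ u : V, ∑ v : V, if G.Adj u v then M / n * (1 / (G.degree v)) else 0)
          ≤ (n : ℝ) * (M / n) := by
        rw [Finset.sum_comm]
        calc (∑ v : V, ∑ u : V, if G.Adj u v then M / n * (1 / (G.degree v)) else 0)
            ≤ ∑ _v : V, M / n := Finset.sum_le_sum fun v _ => hT2 v
          _ = (n : ℝ) * (M / n) := by
              rw [Finset.sum_const, Finset.card_univ, nsmul_eq_mul, hn]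
      have : (n : ℝ) * (M / n) = M := by
        field_simp
      linarith
    calc (∑ u : V, ∑ v : V, if G.Adj u v then f (G.degree u) (G.degree v) else 0)
        ≤ _ := hbound
      _ ≤ 2 * M := hfinal
      _ = M * 2 := by ring
end

section
/- Let f : ℕ × ℕ → ℝ be a symmetric monotone nonnegative function and Q(G) = Σ_{uv ∈ E(G)} f(d(u), d(v)). If G is a triangle-free graph on n vertices with maximum degree Δ < n/2, then Q(G) ≤ Q(K_{⌊n/2⌋, ⌈n/2⌉}). -/
open SimpleGraph Finset

attribute [local instance] Classical.propDecidable

lemma degL (a b : ℕ) (i : Fin a) :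
    (completeBipartiteGraph (Fin a) (Fin b)).degree (Sum.inl i) = b := by
  have h : (completeBipartiteGraph (Fin a) (Fin b)).neighborFinset (Sum.inl i)
      = Finset.univ.map ⟨Sum.inr, Sum.inr_injective⟩ := by
    ext w; cases w <;> simp [SimpleGraph.mem_neighborFinset]
  simp [SimpleGraph.degree, h]

lemma degR (a b : ℕ) (j : Fin b) :
    (completeBipartiteGraph (Fin a) (Fin b)).degree (Sum.inr j) = a := by
  have h : (completeBipartiteGraph (Fin a) (Fin b)).neighborFinset (Sum.inr j)
      = Finset.univ.map ⟨Sum.inl, Sum.inl_injective⟩ := by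
    ext w; cases w <;> simp [SimpleGraph.mem_neighborFinset]
  simp [SimpleGraph.degree, h]

/-- For a symmetric monotone nonnegative `f` and
`Q(G) = ∑_{uv ∈ E(G)} f(d(u), d(v))`: any triangle-free graph on `n` vertices whose maximum
degree is less than `n/2` satisfies `Q(G) ≤ Q(K_{⌊n/2⌋, ⌈n/2⌉})`. -/
theorem Qindex_le_balanced_completeBipartite_of_maxDegree_lt {V : Type*} [Fintype V]
    (f : ℕ → ℕ → ℝ)
    (hmono : ∀ x x' y y' : ℕ, x ≤ x' → y ≤ y' → f x y ≤ f x' y')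
    (hnonneg : ∀ x y : ℕ, 0 ≤ f x y)
    (hsym : ∀ x y : ℕ, f x y = f y x)
    (G : SimpleGraph V) (hG : G.CliqueFree 3)
    (hΔ : 2 * G.maxDegree < Fintype.card V) :
    Qindex f G ≤
      Qindex f (completeBipartiteGraph (Fin (Fintype.card V / 2))
        (Fin (Fintype.card V - Fintype.card V / 2))) := by
  classical
  set n := Fintype.card V with hn
  set a := n / 2
  set b := n - n / 2
  set Δ := G.maxDegree with hΔdef
  -- compute Q of the complete bipartite graph
  have hQK : Qindex f (completeBipartiteGraph (Fin a) (Fin b))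
      = (a * b : ℝ) * f a b := by
    unfold Qindex
    rw [Fintype.sum_sum_type]
    have h1 : ∀ i : Fin a,
        (∑ v : Fin a ⊕ Fin b, if (completeBipartiteGraph (Fin a) (Fin b)).Adj (Sum.inl i) v
          then f ((completeBipartiteGraph (Fin a) (Fin b)).degree (Sum.inl i))
            ((completeBipartiteGraph (Fin a) (Fin b)).degree v) else 0)
        = (b : ℝ) * f b a := by
      intro i
      rw [Fintype.sum_sum_type]
      simp [degL, degR, mul_comm]
    have h2 : ∀ j : Fin b,
        (∑ v : Fin a ⊕ Fin b, if (completeBipartiteGraph (Fin a) (Fin b)).Adj (Sum.inr j) v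
          then f ((completeBipartiteGraph (Fin a) (Fin b)).degree (Sum.inr j))
            ((completeBipartiteGraph (Fin a) (Fin b)).degree v) else 0)
        = (a : ℝ) * f a b := by
      intro j
      rw [Fintype.sum_sum_type]
      simp [degL, degR, mul_comm]
    simp only [h1, h2, Finset.sum_const, Finset.card_univ, Fintype.card_fin, nsmul_eq_mul]
    rw [hsym b a]
    ring
  rw [hQK]
  -- bound Q(G)
  have hdeg : ∀ u : V, G.degree u ≤ Δ := fun u => G.degree_le_maxDegree u
  have hfc : ∀ u v : V, G.Adj u v → f (G.degree u) (G.degree v) ≤ f a b := by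
    intro u v _
    exact hmono _ _ _ _ (le_trans (hdeg u) (by omega)) (le_trans (hdeg v) (by omega))
  have hsum : (∑ u : V, ∑ v : V, if G.Adj u v then f (G.degree u) (G.degree v) else 0)
      ≤ ∑ u : V, (G.degree u : ℝ) * f a b := by
    apply Finset.sum_le_sum
    intro u _
    have : (∑ v : V, if G.Adj u v then f (G.degree u) (G.degree v) else 0)
        ≤ ∑ v : V, (if G.Adj u v then f a b else 0) := by
      apply Finset.sum_le_sum
      intro v _
      by_cases h : G.Adj u v
      · simp [h]; exact hfc u v h
      · simp [h]
    refine this.trans ?_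
    rw [Finset.sum_ite, Finset.sum_const, Finset.sum_const_zero, add_zero, nsmul_eq_mul,
      ← SimpleGraph.neighborFinset_eq_filter, SimpleGraph.card_neighborFinset_eq_degree]
  have hdegsum : (∑ u : V, (G.degree u : ℝ)) ≤ (n : ℝ) * Δ := by
    calc (∑ u : V, (G.degree u : ℝ)) ≤ ∑ _u : V, (Δ : ℝ) := by
          apply Finset.sum_le_sum; intro u _; exact_mod_cast hdeg u
      _ = (n : ℝ) * Δ := by simp [hn, mul_comm]
  have hab : (n : ℝ) * Δ ≤ 2 * (a * b) := by
    have : n * Δ ≤ 2 * (a * b) := by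
      calc n * Δ ≤ (2 * b) * a := Nat.mul_le_mul (by omega) (by omega)
        _ = 2 * (a * b) := by ring
    exact_mod_cast this
  have hfin : (∑ u : V, ∑ v : V, if G.Adj u v then f (G.degree u) (G.degree v) else 0)
      ≤ 2 * ((a * b : ℝ) * f a b) := by
    refine hsum.trans ?_
    rw [← Finset.sum_mul]
    calc (∑ u : V, (G.degree u : ℝ)) * f a b ≤ ((n : ℝ) * Δ) * f a b :=
          mul_le_mul_of_nonneg_right hdegsum (hnonneg a b)
      _ ≤ (2 * (a * b)) * f a b := mul_le_mul_of_nonneg_right hab (hnonneg a b)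
      _ = 2 * ((a * b : ℝ) * f a b) := by ring
  unfold Qindex
  linarith
end

section
/- Among all connected n-vertex graphs containing a triangle (i.e., with clique number at least 3) that have clique number exactly 3, the kite graph Ki(n,3) minimizes the number of edges (copies of P₂) and the number of copies of P₃ and of K₃ simultaneously: namely N(P₂,Ki(n,3)) = n, N(P₃,Ki(n,3)) = n+1, N(K₃,Ki(n,3)) = 1, and any connected n-vertex graph with clique number 3 satisfies N(P₂,G) ≥ n, N(P₃,G) ≥ n+1, N(K₃,G) ≥ 1. -/
open SimpleGraph Finset

attribute [local instance] Classical.propDecidable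

/-- `copyCount H G` is the number of (not necessarily induced) subgraphs of `G`
isomorphic to `H`. -/
noncomputable def copyCount {α β : Type*} (H : SimpleGraph α) (G : SimpleGraph β) : ℕ :=
  Nat.card {G' : G.Subgraph // Nonempty (G'.coe ≃g H)}

/-- The kite graph `Ki(n,k)`: a clique on the vertices `0, …, k−1` together with the path
`k−1, k, k+1, …, n−1` (so the path on the `n−k` remaining vertices is attached by an edge
to the clique vertex `k−1`). -/
def kiteGraph (n k : ℕ) : SimpleGraph (Fin n) :=
  SimpleGraph.fromRel
    (fun i j => ((i : ℕ) < k ∧ (j : ℕ) < k) ∨ ((j : ℕ) = (i : ℕ) + 1 ∧ k ≤ (j : ℕ)))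


section Aux


variable {V : Type*} {G : SimpleGraph V}

/-- The subgraph consisting of a single edge. -/
def edgeSub (G : SimpleGraph V) (e : Sym2 V) (he : e ∈ G.edgeSet) : G.Subgraph where
  verts := {v | v ∈ e}
  Adj x y := s(x, y) = e
  adj_sub h := by rw [← SimpleGraph.mem_edgeSet, h]; exact he
  edge_vert h := by rw [← h]; exact Sym2.mem_mk_left _ _
  symm := ⟨fun x y h => by rwa [Sym2.eq_swap]⟩

lemma edgeSub_iso (e : Sym2 V) (he : e ∈ G.edgeSet) :
    Nonempty ((edgeSub G e he).coe ≃g pathGraph 2) := by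
  induction e using Sym2.ind with
  | _ a b =>
  rw [SimpleGraph.mem_edgeSet] at he
  have hab : a ≠ b := he.ne
  have ha : a ∈ (edgeSub G s(a,b) (by simpa using he)).verts := Sym2.mem_mk_left _ _
  have hb : b ∈ (edgeSub G s(a,b) (by simpa using he)).verts := Sym2.mem_mk_right _ _
  set H := edgeSub G s(a,b) (by simpa using he) with hH
  let g : Fin 2 → H.verts := ![⟨a, ha⟩, ⟨b, hb⟩]
  have hg : Function.Bijective g := by
    constructor
    · intro i j hij
      fin_cases i <;> fin_cases j <;> simp_all [g, Subtype.ext_iff]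
    · rintro ⟨x, hx⟩
      rcases Sym2.mem_iff.mp hx with rfl | rfl
      · exact ⟨0, rfl⟩
      · exact ⟨1, rfl⟩
  refine ⟨(RelIso.mk (Equiv.ofBijective g hg) ?_).symm⟩
  intro i j
  fin_cases i <;> fin_cases j <;>
    simp only [Equiv.ofBijective_apply] <;> simp [g, Equiv.ofBijective, H, edgeSub, pathGraph_adj, Sym2.eq_iff, hab, hab.symm, SimpleGraph.Subgraph.coe_adj]

lemma edgeSub_injective (G : SimpleGraph V) :
    Function.Injective (fun e : G.edgeSet => edgeSub G e.1 e.2) := by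
  rintro ⟨e, he⟩ ⟨e', he'⟩ h
  simp only at h
  apply Subtype.ext
  simp only
  induction e using Sym2.ind with
  | _ a b =>
  have h1 : (edgeSub G s(a,b) he).Adj a b := rfl
  rw [h] at h1
  exact h1

lemma copyCount_pathGraph_two (G : SimpleGraph V) [Fintype V] :
    _root_.copyCount (pathGraph 2) G = G.edgeFinset.card := by
  classical
  have hb : Function.Bijective (fun e : G.edgeSet =>
      (⟨edgeSub G e.1 e.2, edgeSub_iso e.1 e.2⟩ :
      {G' : G.Subgraph // Nonempty (G'.coe ≃g pathGraph 2)})) := by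
    constructor
    · intro e e' h
      exact edgeSub_injective G (Subtype.ext_iff.mp h)
    · rintro ⟨G', ⟨φ⟩⟩
      set a : V := ((φ.symm 0 : G'.verts) : V) with hadef
      set b : V := ((φ.symm 1 : G'.verts) : V) with hbdef
      have haG : a ∈ G'.verts := (φ.symm 0).2
      have hbG : b ∈ G'.verts := (φ.symm 1).2
      have hadj : G'.Adj a b := by
        have h01 : (pathGraph 2).Adj 0 1 := by simp [pathGraph_adj]
        have := φ.symm.map_adj_iff.mpr h01
        rwa [SimpleGraph.Subgraph.coe_adj] at this
      have hne : a ≠ b := (G'.adj_sub hadj).ne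
      have hverts : G'.verts = {x | x ∈ s(a, b)} := by
        ext x
        constructor
        · intro hx
          simp only [Set.mem_setOf_eq, Sym2.mem_iff]
          have : φ ⟨x, hx⟩ = 0 ∨ φ ⟨x, hx⟩ = 1 := by omega
          rcases this with h0 | h0
          · have : (⟨x, hx⟩ : G'.verts) = φ.symm 0 := by
              rw [← h0]; exact (φ.symm_apply_apply _).symm
            left; rw [hadef, ← this]
          · have : (⟨x, hx⟩ : G'.verts) = φ.symm 1 := by
              rw [← h0]; exact (φ.symm_apply_apply _).symm
            right; rw [hbdef, ← this]
        · intro hx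
          rcases Sym2.mem_iff.mp hx with rfl | rfl
          · exact haG
          · exact hbG
      have hAdj : ∀ x y, G'.Adj x y ↔ s(x, y) = s(a, b) := by
        intro x y
        constructor
        · intro hxy
          have hx : x ∈ G'.verts := G'.edge_vert hxy
          have hy : y ∈ G'.verts := G'.edge_vert hxy.symm
          have hxyne : x ≠ y := (G'.adj_sub hxy).ne
          rw [hverts] at hx hy
          rw [Sym2.eq_iff]
          rcases Sym2.mem_iff.mp hx with rfl | rfl <;>
            rcases Sym2.mem_iff.mp hy with rfl | rfl <;> tauto
        · intro hxy
          rcases Sym2.eq_iff.mp hxy with ⟨rfl, rfl⟩ | ⟨rfl, rfl⟩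
          · exact hadj
          · exact hadj.symm
      have heG : s(a, b) ∈ G.edgeSet := G'.adj_sub hadj
      refine ⟨⟨s(a,b), heG⟩, ?_⟩
      apply Subtype.ext
      apply SimpleGraph.Subgraph.ext
      · exact hverts.symm
      · ext x y
        rw [hAdj x y]
        exact Iff.rfl
  have := Nat.card_eq_of_bijective _ hb
  rw [_root_.copyCount, ← this, Nat.card_coe_set_eq, SimpleGraph.edgeFinset,
    Set.ncard_eq_toFinset_card']


variable {V : Type*} {G : SimpleGraph V}

def cliqueSub (G : SimpleGraph V) (s : Finset V) (hs : G.IsNClique 3 s) : G.Subgraph where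
  verts := ↑s
  Adj x y := x ∈ s ∧ y ∈ s ∧ x ≠ y
  adj_sub h := hs.1 h.1 h.2.1 h.2.2
  edge_vert h := h.1
  symm := ⟨fun x y h => ⟨h.2.1, h.1, h.2.2.symm⟩⟩

lemma cliqueSub_iso (s : Finset V) (hs : G.IsNClique 3 s) :
    Nonempty ((cliqueSub G s hs).coe ≃g (⊤ : SimpleGraph (Fin 3))) := by
  obtain ⟨a, b, c, hab, hac, hbc, rfl⟩ := Finset.card_eq_three.mp hs.2
  have ha : a ∈ ({a,b,c} : Finset V) := by simp
  have hb : b ∈ ({a,b,c} : Finset V) := by simp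
  have hc : c ∈ ({a,b,c} : Finset V) := by simp
  let g : Fin 3 → (cliqueSub G _ hs).verts := ![⟨a, ha⟩, ⟨b, hb⟩, ⟨c, hc⟩]
  have hg : Function.Bijective g := by
    constructor
    · intro i j hij
      fin_cases i <;> fin_cases j <;> simp_all [g, Subtype.ext_iff]
    · rintro ⟨x, hx⟩
      simp only [cliqueSub, Finset.coe_insert, Set.mem_insert_iff, Finset.coe_singleton,
        Set.mem_singleton_iff] at hx
      rcases hx with rfl | rfl | rfl
      · exact ⟨0, rfl⟩
      · exact ⟨1, rfl⟩
      · exact ⟨2, rfl⟩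
  refine ⟨(RelIso.mk (Equiv.ofBijective g hg) ?_).symm⟩
  intro i j
  fin_cases i <;> fin_cases j <;>
    simp only [Equiv.ofBijective_apply] <;> simp [g, Equiv.ofBijective, cliqueSub, hab, hac, hbc, hab.symm, hac.symm, hbc.symm,
      SimpleGraph.Subgraph.coe_adj]

lemma cliqueSub_injective (G : SimpleGraph V) :
    Function.Injective (fun p : {s : Finset V // G.IsNClique 3 s} => cliqueSub G p.1 p.2) := by
  rintro ⟨s, hs⟩ ⟨s', hs'⟩ h
  simp only at h
  apply Subtype.ext
  simp only
  have : (↑s : Set V) = ↑s' := congrArg SimpleGraph.Subgraph.verts h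
  exact_mod_cast this

lemma copyCount_top_three (G : SimpleGraph V) [Fintype V] :
    _root_.copyCount (⊤ : SimpleGraph (Fin 3)) G = Nat.card {s : Finset V // G.IsNClique 3 s} := by
  classical
  have hb : Function.Bijective (fun p : {s : Finset V // G.IsNClique 3 s} =>
      (⟨cliqueSub G p.1 p.2, cliqueSub_iso p.1 p.2⟩ :
      {G' : G.Subgraph // Nonempty (G'.coe ≃g (⊤ : SimpleGraph (Fin 3)))})) := by
    constructor
    · intro p p' h
      exact cliqueSub_injective G (Subtype.ext_iff.mp h)
    · rintro ⟨G', ⟨φ⟩⟩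
      set a : V := ((φ.symm 0 : G'.verts) : V) with hadef
      set b : V := ((φ.symm 1 : G'.verts) : V) with hbdef
      set c : V := ((φ.symm 2 : G'.verts) : V) with hcdef
      have hinj : ∀ i j : Fin 3, i ≠ j → ((φ.symm i : G'.verts) : V) ≠ ((φ.symm j : G'.verts) : V) := by
        intro i j hij hc
        exact hij (φ.symm.injective (Subtype.ext hc))
      have hab : a ≠ b := hinj 0 1 (by decide)
      have hac : a ≠ c := hinj 0 2 (by decide)
      have hbc : b ≠ c := hinj 1 2 (by decide)
      have hverts : G'.verts = {x | x = a ∨ x = b ∨ x = c} := by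
        ext x
        constructor
        · intro hx
          have h3 : φ ⟨x, hx⟩ = 0 ∨ φ ⟨x, hx⟩ = 1 ∨ φ ⟨x, hx⟩ = 2 := by omega
          simp only [Set.mem_setOf_eq]
          rcases h3 with h0 | h0 | h0 <;>
          [ (left; rw [hadef]); (right; left; rw [hbdef]); (right; right; rw [hcdef])] <;>
          · rw [← h0, φ.symm_apply_apply]
        · rintro (rfl | rfl | rfl)
          exacts [(φ.symm 0).2, (φ.symm 1).2, (φ.symm 2).2]
      -- adjacency inside verts
      have hAdjIff : ∀ x y, G'.Adj x y ↔ (x ∈ G'.verts ∧ y ∈ G'.verts ∧ x ≠ y) := by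
        intro x y
        constructor
        · intro h
          exact ⟨G'.edge_vert h, G'.edge_vert h.symm, (G'.adj_sub h).ne⟩
        · rintro ⟨hx, hy, hne⟩
          have : G'.coe.Adj ⟨x, hx⟩ ⟨y, hy⟩ := by
            rw [← φ.symm_apply_apply ⟨x, hx⟩, ← φ.symm_apply_apply ⟨y, hy⟩]
            rw [φ.symm.map_adj_iff]
            simp only [SimpleGraph.top_adj]
            intro heq
            exact hne (congrArg Subtype.val (φ.injective heq))
          exact this
      have hsN : G.IsNClique 3 ({a, b, c} : Finset V) := by
        constructor
        · intro x hx y hy hne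
          apply G'.adj_sub
          rw [hAdjIff]
          simp only [Finset.coe_insert, Set.mem_insert_iff, Finset.coe_singleton,
            Set.mem_singleton_iff] at hx hy
          refine ⟨?_, ?_, hne⟩ <;> rw [hverts] <;> simp_all
        · rw [Finset.card_insert_of_notMem (by simp [hab, hac]),
            Finset.card_insert_of_notMem (by simp [hbc])]
          simp
      refine ⟨⟨{a, b, c}, hsN⟩, ?_⟩
      apply Subtype.ext
      apply SimpleGraph.Subgraph.ext
      · simp only [cliqueSub]
        rw [hverts]
        ext x
        simp
      · ext x y
        rw [hAdjIff]
        simp only [cliqueSub, Finset.mem_insert, Finset.mem_singleton]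
        rw [hverts]
        simp only [Set.mem_setOf_eq]
  have := Nat.card_eq_of_bijective _ hb
  rw [_root_.copyCount, ← this]


variable {V : Type*} {G : SimpleGraph V}

def cherrySub (G : SimpleGraph V) (v : V) (s : Finset V) (hs : ∀ x ∈ s, G.Adj v x) :
    G.Subgraph where
  verts := insert v ↑s
  Adj x y := (x = v ∧ y ∈ s) ∨ (y = v ∧ x ∈ s)
  adj_sub h := by
    rcases h with ⟨rfl, h⟩ | ⟨rfl, h⟩
    exacts [hs _ h, (hs _ h).symm]
  edge_vert h := by
    rcases h with ⟨rfl, h⟩ | ⟨rfl, h⟩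
    · exact Set.mem_insert _ _
    · exact Set.mem_insert_of_mem _ h
  symm := ⟨fun x y h => by tauto⟩

lemma cherrySub_iso (v : V) (s : Finset V) (hs : ∀ x ∈ s, G.Adj v x) (hcard : s.card = 2) :
    Nonempty ((cherrySub G v s hs).coe ≃g pathGraph 3) := by
  obtain ⟨a, c, hac, rfl⟩ := Finset.card_eq_two.mp hcard
  have hva : v ≠ a := (hs a (by simp)).ne
  have hvc : v ≠ c := (hs c (by simp)).ne
  have ha : a ∈ (cherrySub G v {a, c} hs).verts := by right; simp
  have hv : v ∈ (cherrySub G v {a, c} hs).verts := Set.mem_insert _ _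
  have hc : c ∈ (cherrySub G v {a, c} hs).verts := by right; simp
  let g : Fin 3 → (cherrySub G v {a, c} hs).verts := ![⟨a, ha⟩, ⟨v, hv⟩, ⟨c, hc⟩]
  have hg : Function.Bijective g := by
    constructor
    · intro i j hij
      fin_cases i <;> fin_cases j <;> simp_all [g, Subtype.ext_iff, hva.symm, hvc.symm, hac]
    · rintro ⟨x, hx⟩
      simp only [cherrySub, Set.mem_insert_iff, Finset.coe_insert, Finset.coe_singleton,
        Set.mem_singleton_iff] at hx
      rcases hx with rfl | rfl | rfl
      · exact ⟨1, rfl⟩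
      · exact ⟨0, rfl⟩
      · exact ⟨2, rfl⟩
  refine ⟨(RelIso.mk (Equiv.ofBijective g hg) ?_).symm⟩
  intro i j
  fin_cases i <;> fin_cases j <;>
    simp only [Equiv.ofBijective_apply] <;> simp [g, Equiv.ofBijective, cherrySub, pathGraph_adj, hva, hvc, hva.symm, hvc.symm,
      hac, hac.symm, SimpleGraph.Subgraph.coe_adj]

lemma cherrySub_injective (G : SimpleGraph V)
    (p p' : {q : V × Finset V // (∀ x ∈ q.2, G.Adj q.1 x) ∧ q.2.card = 2})
    (h : cherrySub G p.1.1 p.1.2 p.2.1 = cherrySub G p'.1.1 p'.1.2 p'.2.1) : p = p' := by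
  obtain ⟨⟨v, s⟩, hs, hcard⟩ := p
  obtain ⟨⟨v', s'⟩, hs', hcard'⟩ := p'
  simp only at h ⊢
  have hAdj : ∀ x y, ((x = v ∧ y ∈ s) ∨ (y = v ∧ x ∈ s)) ↔
      ((x = v' ∧ y ∈ s') ∨ (y = v' ∧ x ∈ s')) := by
    intro x y
    exact Iff.of_eq (congrFun (congrFun (congrArg SimpleGraph.Subgraph.Adj h) x) y)
  have hvv : v = v' := by
    by_contra hne
    obtain ⟨a, c, hac, rfl⟩ := Finset.card_eq_two.mp hcard
    have h1 : (v = v' ∧ a ∈ s') ∨ (a = v' ∧ v ∈ s') := (hAdj v a).mp (Or.inl ⟨rfl, by simp⟩)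
    have h2 : (v = v' ∧ c ∈ s') ∨ (c = v' ∧ v ∈ s') := (hAdj v c).mp (Or.inl ⟨rfl, by simp⟩)
    have ha' : a = v' := by tauto
    have hc' : c = v' := by tauto
    exact hac (ha'.trans hc'.symm)
  subst hvv
  have hss : s = s' := by
    ext x
    have hxv : x ∈ s → x ≠ v := fun hx => (hs x hx).ne'
    have hxv' : x ∈ s' → x ≠ v := fun hx => (hs' x hx).ne'
    constructor
    · intro hx
      have := (hAdj v x).mp (Or.inl ⟨rfl, hx⟩)
      rcases this with ⟨_, h⟩ | ⟨h, _⟩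
      · exact h
      · exact absurd h (hxv hx)
    · intro hx
      have := (hAdj v x).mpr (Or.inl ⟨rfl, hx⟩)
      rcases this with ⟨_, h⟩ | ⟨h, _⟩
      · exact h
      · exact absurd h (hxv' hx)
  subst hss
  rfl

lemma copyCount_pathGraph_three (G : SimpleGraph V) [Fintype V] :
    _root_.copyCount (pathGraph 3) G = ∑ v, (G.degree v).choose 2 := by
  classical
  have hb : Function.Bijective
      (fun p : {q : V × Finset V // (∀ x ∈ q.2, G.Adj q.1 x) ∧ q.2.card = 2} =>
      (⟨cherrySub G p.1.1 p.1.2 p.2.1, cherrySub_iso p.1.1 p.1.2 p.2.1 p.2.2⟩ :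
      {G' : G.Subgraph // Nonempty (G'.coe ≃g pathGraph 3)})) := by
    constructor
    · intro p p' h
      exact cherrySub_injective G p p' (Subtype.ext_iff.mp h)
    · rintro ⟨G', ⟨φ⟩⟩
      set a : V := ((φ.symm 0 : G'.verts) : V) with hadef
      set v : V := ((φ.symm 1 : G'.verts) : V) with hvdef
      set c : V := ((φ.symm 2 : G'.verts) : V) with hcdef
      have haG : a ∈ G'.verts := (φ.symm 0).2
      have hvG : v ∈ G'.verts := (φ.symm 1).2
      have hcG : c ∈ G'.verts := (φ.symm 2).2
      have hinj : ∀ i j : Fin 3, i ≠ j →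
          ((φ.symm i : G'.verts) : V) ≠ ((φ.symm j : G'.verts) : V) := by
        intro i j hij hc
        exact hij (φ.symm.injective (Subtype.ext hc))
      have hav : a ≠ v := hinj 0 1 (by decide)
      have hak : a ≠ c := hinj 0 2 (by decide)
      have hvk : v ≠ c := hinj 1 2 (by decide)
      have himg : ∀ (i : Fin 3), φ ⟨((φ.symm i : G'.verts) : V), (φ.symm i).2⟩ = i := by
        intro i
        have : (⟨((φ.symm i : G'.verts) : V), (φ.symm i).2⟩ : G'.verts) = φ.symm i :=
          Subtype.ext rfl
        rw [this, φ.apply_symm_apply]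
      have htrans : ∀ (x y : V) (hx : x ∈ G'.verts) (hy : y ∈ G'.verts),
          G'.Adj x y ↔ (pathGraph 3).Adj (φ ⟨x, hx⟩) (φ ⟨y, hy⟩) := by
        intro x y hx hy
        rw [φ.map_adj_iff, SimpleGraph.Subgraph.coe_adj]
      have hverts : G'.verts = {x | x = a ∨ x = v ∨ x = c} := by
        ext x
        constructor
        · intro hx
          have h3 : φ ⟨x, hx⟩ = 0 ∨ φ ⟨x, hx⟩ = 1 ∨ φ ⟨x, hx⟩ = 2 := by omega
          simp only [Set.mem_setOf_eq]
          rcases h3 with h0 | h0 | h0 <;>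
          [left; (right; left); (right; right)] <;>
          · have h4 := φ.symm_apply_apply (⟨x, hx⟩ : G'.verts)
            rw [h0] at h4
            exact (congrArg Subtype.val h4).symm
        · rintro (rfl | rfl | rfl)
          exacts [haG, hvG, hcG]
      -- key adjacency facts
      have hAdjav : G'.Adj a v := by
        rw [htrans a v haG hvG, himg 0, himg 1]
        simp [pathGraph_adj]
      have hAdjvc : G'.Adj v c := by
        rw [htrans v c hvG hcG, himg 1, himg 2]
        simp [pathGraph_adj]
      have hAdjac : ¬ G'.Adj a c := by
        rw [htrans a c haG hcG, himg 0, himg 2]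
        simp [pathGraph_adj]
      have hs : ∀ x ∈ ({a, c} : Finset V), G.Adj v x := by
        intro x hx
        rcases Finset.mem_insert.mp hx with rfl | hx
        · exact G'.adj_sub hAdjav.symm
        · rw [Finset.mem_singleton] at hx; subst hx
          exact G'.adj_sub hAdjvc
      have hcard2 : ({a, c} : Finset V).card = 2 := by
        rw [Finset.card_insert_of_notMem (by simp [hak]), Finset.card_singleton]
      refine ⟨⟨⟨v, {a, c}⟩, hs, hcard2⟩, ?_⟩
      apply Subtype.ext
      apply SimpleGraph.Subgraph.ext
      · simp only [cherrySub]
        rw [hverts]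
        ext x
        simp only [Set.mem_setOf_eq, Set.mem_insert_iff, Finset.coe_insert,
          Finset.coe_singleton, Set.mem_singleton_iff]
        tauto
      · ext x y
        simp only [cherrySub, Finset.mem_insert, Finset.mem_singleton]
        have hirr : ∀ z, ¬ G'.Adj z z := fun z h => (G'.adj_sub h).ne rfl
        constructor
        · rintro (⟨rfl, rfl | rfl⟩ | ⟨rfl, rfl | rfl⟩)
          exacts [hAdjav.symm, hAdjvc, hAdjav, hAdjvc.symm]
        · intro hxy
          have hx' := G'.edge_vert hxy
          have hy' := G'.edge_vert hxy.symm
          rw [hverts, Set.mem_setOf_eq] at hx' hy'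
          rcases hx' with rfl | rfl | rfl <;> rcases hy' with rfl | rfl | rfl <;>
            first
            | exact absurd hxy (hirr _)
            | exact absurd hxy hAdjac
            | exact absurd hxy.symm hAdjac
            | tauto
  have hcnt := Nat.card_eq_of_bijective _ hb
  rw [_root_.copyCount, ← hcnt]
  have e1 : {q : V × Finset V // (∀ x ∈ q.2, G.Adj q.1 x) ∧ q.2.card = 2} ≃
      Σ v : V, {s : Finset V // s ∈ Finset.powersetCard 2 (G.neighborFinset v)} := by
    refine (Equiv.subtypeProdEquivSigmaSubtype
      (fun (v : V) (s : Finset V) => (∀ x ∈ s, G.Adj v x) ∧ s.card = 2)).trans ?_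
    refine Equiv.sigmaCongrRight fun v => Equiv.subtypeEquivRight fun s => ?_
    rw [Finset.mem_powersetCard]
    constructor
    · rintro ⟨h1, h2⟩
      exact ⟨fun x hx => (G.mem_neighborFinset v x).mpr (h1 x hx), h2⟩
    · rintro ⟨h1, h2⟩
      exact ⟨fun x hx => (G.mem_neighborFinset v x).mp (h1 hx), h2⟩
  rw [Nat.card_congr e1, Nat.card_eq_fintype_card, Fintype.card_sigma]
  refine Finset.sum_congr rfl fun v _ => ?_
  rw [Fintype.card_coe, Finset.card_powersetCard]
  rfl

end Aux

section Kite


lemma kite_adj {n : ℕ} (i j : Fin n) : (kiteGraph n 3).Adj i j ↔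
    (i : ℕ) ≠ (j : ℕ) ∧ (((i : ℕ) < 3 ∧ (j : ℕ) < 3) ∨
      ((j : ℕ) = (i : ℕ) + 1 ∧ 3 ≤ (j : ℕ)) ∨ ((i : ℕ) = (j : ℕ) + 1 ∧ 3 ≤ (i : ℕ))) := by
  rw [kiteGraph, SimpleGraph.fromRel_adj, Ne, Ne, Fin.ext_iff]
  omega

lemma kite_degree {n : ℕ} (hn : 4 ≤ n) (v : Fin n) :
    (kiteGraph n 3).degree v =
      if (v : ℕ) = 2 then 3 else if (v : ℕ) = n - 1 then 1 else 2 := by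
  have hdeg : (kiteGraph n 3).degree v = ((kiteGraph n 3).neighborFinset v).card := rfl
  have hv := v.isLt
  by_cases h2 : (v : ℕ) = 2
  · have hnb : (kiteGraph n 3).neighborFinset v =
        {(⟨0, by omega⟩ : Fin n), ⟨1, by omega⟩, ⟨3, by omega⟩} := by
      ext x
      simp only [SimpleGraph.mem_neighborFinset, kite_adj, Finset.mem_insert,
        Finset.mem_singleton, Fin.ext_iff]
      omega
    rw [hdeg, hnb, if_pos h2]
    rw [Finset.card_insert_of_notMem (by simp [Fin.ext_iff]),
      Finset.card_insert_of_notMem (by simp [Fin.ext_iff]), Finset.card_singleton]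
  · by_cases hl : (v : ℕ) = n - 1
    · have hnb : (kiteGraph n 3).neighborFinset v = {(⟨n - 2, by omega⟩ : Fin n)} := by
        ext x
        simp only [SimpleGraph.mem_neighborFinset, kite_adj, Finset.mem_singleton, Fin.ext_iff]
        omega
      rw [hdeg, hnb, if_neg h2, if_pos hl, Finset.card_singleton]
    · rw [hdeg, if_neg h2, if_neg hl]
      by_cases h01 : (v : ℕ) < 2
      · have hnb : (kiteGraph n 3).neighborFinset v =
            {(⟨1 - (v : ℕ), by omega⟩ : Fin n), ⟨2, by omega⟩} := by
          ext x
          simp only [SimpleGraph.mem_neighborFinset, kite_adj, Finset.mem_insert,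
            Finset.mem_singleton, Fin.ext_iff]
          omega
        rw [hnb, Finset.card_insert_of_notMem (by simp only [Finset.mem_singleton, Fin.ext_iff]; omega),
          Finset.card_singleton]
      · have hnb : (kiteGraph n 3).neighborFinset v =
            {(⟨(v : ℕ) - 1, by omega⟩ : Fin n), ⟨(v : ℕ) + 1, by omega⟩} := by
          ext x
          simp only [SimpleGraph.mem_neighborFinset, kite_adj, Finset.mem_insert,
            Finset.mem_singleton, Fin.ext_iff]
          omega
        rw [hnb, Finset.card_insert_of_notMem (by simp only [Finset.mem_singleton, Fin.ext_iff]; omega),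
          Finset.card_singleton]

lemma kite_sum {n : ℕ} (hn : 4 ≤ n) (f : ℕ → ℕ) :
    ∑ v : Fin n, f ((kiteGraph n 3).degree v) = f 3 + f 1 + (n - 2) * f 2 := by
  have h1 : ∑ v : Fin n, f ((kiteGraph n 3).degree v) =
      ∑ i ∈ Finset.range n, f (if i = 2 then 3 else if i = n - 1 then 1 else 2) := by
    rw [Finset.sum_range fun i => f (if i = 2 then 3 else if i = n - 1 then 1 else 2)]
    exact Finset.sum_congr rfl fun v _ => by rw [kite_degree hn v]
  rw [h1]
  have h2m : (2 : ℕ) ∈ Finset.range n := by simp; omega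
  rw [← Finset.add_sum_erase _ _ h2m, if_pos rfl]
  have hlm : n - 1 ∈ (Finset.range n).erase 2 := by
    simp only [Finset.mem_erase, Finset.mem_range]
    omega
  rw [← Finset.add_sum_erase _ _ hlm, if_neg (by omega), if_pos rfl]
  have hconst : ∀ i ∈ ((Finset.range n).erase 2).erase (n - 1),
      f (if i = 2 then 3 else if i = n - 1 then 1 else 2) = f 2 := by
    intro i hi
    simp only [Finset.mem_erase, Finset.mem_range] at hi
    rw [if_neg hi.2.1, if_neg hi.1]
  rw [Finset.sum_congr rfl hconst, Finset.sum_const, smul_eq_mul]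
  have hcard : (((Finset.range n).erase 2).erase (n - 1)).card = n - 2 := by
    rw [Finset.card_erase_of_mem hlm, Finset.card_erase_of_mem h2m, Finset.card_range]
    omega
  rw [hcard]
  ring

lemma kite_edge_card {n : ℕ} (hn : 4 ≤ n) : (kiteGraph n 3).edgeFinset.card = n := by
  have h := SimpleGraph.sum_degrees_eq_twice_card_edges (kiteGraph n 3)
  have h2 := kite_sum hn id
  simp only [id] at h2
  rw [h2] at h
  omega

lemma kite_cherries {n : ℕ} (hn : 4 ≤ n) :
    ∑ v : Fin n, ((kiteGraph n 3).degree v).choose 2 = n + 1 := by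
  rw [kite_sum hn (·.choose 2)]
  simp [Nat.choose]
  omega

lemma kite_cliqueFinset {n : ℕ} (hn : 4 ≤ n) :
    (kiteGraph n 3).cliqueFinset 3 =
      {({⟨0, by omega⟩, ⟨1, by omega⟩, ⟨2, by omega⟩} : Finset (Fin n))} := by
  ext s
  rw [SimpleGraph.mem_cliqueFinset_iff, Finset.mem_singleton]
  constructor
  · intro hs
    obtain ⟨a, b, c, hab, hac, hbc, rfl⟩ := Finset.card_eq_three.mp hs.2
    have hab' := (kite_adj a b).mp (hs.1 (by simp) (by simp) hab)
    have hac' := (kite_adj a c).mp (hs.1 (by simp) (by simp) hac)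
    have hbc' := (kite_adj b c).mp (hs.1 (by simp) (by simp) hbc)
    have h3 : (a : ℕ) < 3 ∧ (b : ℕ) < 3 ∧ (c : ℕ) < 3 := by omega
    have hsub : ({a, b, c} : Finset (Fin n)) ⊆
        {(⟨0, by omega⟩ : Fin n), ⟨1, by omega⟩, ⟨2, by omega⟩} := by
      intro x hx
      simp only [Finset.mem_insert, Finset.mem_singleton] at hx
      have hx3 : (x : ℕ) < 3 := by rcases hx with rfl | rfl | rfl <;> omega
      simp only [Finset.mem_insert, Finset.mem_singleton, Fin.ext_iff]
      omega
    have hc3 : ({(⟨0, by omega⟩ : Fin n), ⟨1, by omega⟩, ⟨2, by omega⟩} :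
        Finset (Fin n)).card = 3 := by
      rw [Finset.card_insert_of_notMem (by simp [Fin.ext_iff]),
        Finset.card_insert_of_notMem (by simp [Fin.ext_iff]), Finset.card_singleton]
    exact Finset.eq_of_subset_of_card_le hsub (by rw [hc3, hs.2])
  · intro hs
    subst hs
    constructor
    · intro x hx y hy hne
      rw [kite_adj]
      simp only [Finset.coe_insert, Set.mem_insert_iff, Finset.coe_singleton,
        Set.mem_singleton_iff] at hx hy
      rw [Ne, Fin.ext_iff] at hne
      rcases hx with rfl | rfl | rfl <;> rcases hy with rfl | rfl | rfl <;> simp_all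
    · rw [Finset.card_insert_of_notMem (by simp [Fin.ext_iff]),
        Finset.card_insert_of_notMem (by simp [Fin.ext_iff]), Finset.card_singleton]

end Kite

section LB

variable {V : Type*} [Fintype V] {G : SimpleGraph V}

lemma choose_two_ge_sub_one (d : ℕ) : d - 1 ≤ d.choose 2 := by
  rw [Nat.choose_two_right]
  by_cases h : d ≤ 1
  · omega
  · calc d - 1 = 2 * (d - 1) / 2 := by omega
    _ ≤ d * (d - 1) / 2 := Nat.div_le_div_right (Nat.mul_le_mul_right _ (by omega))

lemma choose_two_ge_self {d : ℕ} (h : 3 ≤ d) : d ≤ d.choose 2 := by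
  rw [Nat.choose_two_right]
  calc d = d * 2 / 2 := by omega
  _ ≤ d * (d - 1) / 2 := Nat.div_le_div_right (Nat.mul_le_mul_left _ (by omega))

lemma exists_triangle (hclique : G.cliqueNum = 3) :
    ∃ a b c : V, a ≠ b ∧ a ≠ c ∧ b ≠ c ∧ G.Adj a b ∧ G.Adj a c ∧ G.Adj b c := by
  obtain ⟨t, ht⟩ := G.exists_isNClique_cliqueNum
  rw [hclique] at ht
  obtain ⟨a, b, c, hab, hac, hbc, rfl⟩ := Finset.card_eq_three.mp ht.2
  exact ⟨a, b, c, hab, hac, hbc, ht.1 (by simp) (by simp) hab,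
    ht.1 (by simp) (by simp) hac, ht.1 (by simp) (by simp) hbc⟩

lemma triangle_card_pos (hclique : G.cliqueNum = 3) :
    1 ≤ Nat.card {s : Finset V // G.IsNClique 3 s} := by
  obtain ⟨t, ht⟩ := G.exists_isNClique_cliqueNum
  rw [hclique] at ht
  have : Nonempty {s : Finset V // G.IsNClique 3 s} := ⟨⟨t, ht⟩⟩
  exact Nat.one_le_iff_ne_zero.mpr Nat.card_pos.ne'

lemma edge_lower_bound {n : ℕ} (hn : 4 ≤ n) (hcard : Fintype.card V = n)
    (hconn : G.Connected) (hclique : G.cliqueNum = 3) : n ≤ G.edgeFinset.card := by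
  classical
  obtain ⟨root⟩ := hconn.nonempty
  have hparent : ∀ v : V, v ≠ root → ∃ u, G.Adj u v ∧ G.dist root u < G.dist root v := by
    intro v hv
    obtain ⟨p, hp⟩ := hconn.exists_walk_length_eq_dist root v
    have hdpos : 0 < G.dist root v := hconn.pos_dist_of_ne (Ne.symm hv)
    cases hq : p.reverse with
    | nil => exact absurd rfl hv
    | @cons _ u _ h q =>
        refine ⟨u, h.symm, ?_⟩
        have hlen : q.length + 1 = p.length := by
          have := congrArg SimpleGraph.Walk.length hq
          rw [SimpleGraph.Walk.length_reverse] at this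
          simpa using this.symm
        have hdu : G.dist root u ≤ q.reverse.length := SimpleGraph.dist_le _
        rw [SimpleGraph.Walk.length_reverse] at hdu
        omega
  have hDle : ∀ x y : V, G.Adj x y → G.dist root x ≤ G.dist root y + 1 := by
    intro x y hxy
    have h1 := hconn.dist_triangle (u := root) (v := y) (w := x)
    rw [(SimpleGraph.dist_eq_one_iff_adj).mpr hxy.symm] at h1
    exact h1
  obtain ⟨a, b, c, hab, hac, hbc, hAab, hAac, hAbc⟩ := exists_triangle hclique
  obtain ⟨x, y, hxy, hdeq⟩ : ∃ x y, G.Adj x y ∧ G.dist root x = G.dist root y := by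
    have h1 := hDle a b hAab
    have h2 := hDle b a hAab.symm
    have h3 := hDle a c hAac
    have h4 := hDle c a hAac.symm
    have h5 := hDle b c hAbc
    have h6 := hDle c b hAbc.symm
    have hd : G.dist root a = G.dist root b ∨ G.dist root a = G.dist root c ∨
        G.dist root b = G.dist root c := by omega
    rcases hd with h | h | h
    exacts [⟨a, b, hAab, h⟩, ⟨a, c, hAac, h⟩, ⟨b, c, hAbc, h⟩]
  have hpu : ∀ (v : V) (hv : v ≠ root), G.Adj (hparent v hv).choose v ∧
      G.dist root (hparent v hv).choose < G.dist root v :=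
    fun v hv => (hparent v hv).choose_spec
  let f : {v : V // v ≠ root} ⊕ Unit → G.edgeSet := fun z =>
    match z with
    | Sum.inl ⟨v, hv⟩ => ⟨s((hparent v hv).choose, v), (hpu v hv).1⟩
    | Sum.inr _ => ⟨s(x, y), hxy⟩
  have hf : Function.Injective f := by
    rintro (⟨v, hv⟩ | u) (⟨v', hv'⟩ | u') h <;>
      simp only [f, Subtype.ext_iff, Sym2.eq_iff] at h
    · rcases h with ⟨h1, h2⟩ | ⟨h1, h2⟩
      · exact congrArg Sum.inl (Subtype.ext h2)
      · exfalso
        have d1 := (hpu v hv).2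
        have d2 := (hpu v' hv').2
        rw [h1] at d1
        rw [← h2] at d2
        omega
    · exfalso
      have d1 := (hpu v hv).2
      rcases h with ⟨h1, h2⟩ | ⟨h1, h2⟩
      · have e : G.dist root x < G.dist root y := by rw [← h1, ← h2]; exact d1
        omega
      · have e : G.dist root y < G.dist root x := by rw [← h1, ← h2]; exact d1
        omega
    · exfalso
      have d1 := (hpu v' hv').2
      rcases h with ⟨h1, h2⟩ | ⟨h1, h2⟩
      · have e : G.dist root x < G.dist root y := by rw [h1, h2]; exact d1
        omega
      · have e : G.dist root y < G.dist root x := by rw [h2, h1]; exact d1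
        omega
    · rw [Subsingleton.elim u u']
  have hcardle := Fintype.card_le_of_injective f hf
  rw [Fintype.card_sum, Fintype.card_unit] at hcardle
  have hsubcard : Fintype.card {v : V // v ≠ root} = n - 1 := by
    rw [Fintype.card_subtype_compl, Fintype.card_subtype_eq, hcard]
  rw [SimpleGraph.edgeFinset_card]
  omega

lemma degree_pos (hcard : 2 ≤ Fintype.card V) (hconn : G.Connected) (v : V) :
    1 ≤ G.degree v := by
  obtain ⟨w, hw⟩ := Fintype.exists_ne_of_one_lt_card (by omega) v
  obtain ⟨p⟩ := hconn v w
  cases p with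
  | nil => exact absurd rfl hw.symm
  | cons h q =>
      exact (G.degree_pos_iff_exists_adj v).mpr ⟨_, h⟩

lemma cherry_lower_bound {n : ℕ} (hn : 4 ≤ n) (hcard : Fintype.card V = n)
    (hconn : G.Connected) (hclique : G.cliqueNum = 3) :
    n + 1 ≤ ∑ v, (G.degree v).choose 2 := by
  classical
  have hedges := edge_lower_bound hn hcard hconn hclique
  have hsum : 2 * n ≤ ∑ v, G.degree v := by
    rw [SimpleGraph.sum_degrees_eq_twice_card_edges]
    omega
  by_cases hbig : ∃ v0 : V, 3 ≤ G.degree v0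
  · obtain ⟨v0, hv0⟩ := hbig
    have hsplit : ∑ v, (G.degree v).choose 2 =
        (G.degree v0).choose 2 + ∑ v ∈ Finset.univ.erase v0, (G.degree v).choose 2 :=
      (Finset.add_sum_erase _ _ (Finset.mem_univ v0)).symm
    have hsplitd : ∑ v, G.degree v =
        G.degree v0 + ∑ v ∈ Finset.univ.erase v0, G.degree v :=
      (Finset.add_sum_erase _ _ (Finset.mem_univ v0)).symm
    have hC : ∑ v ∈ Finset.univ.erase v0, G.degree v ≤
        (∑ v ∈ Finset.univ.erase v0, (G.degree v).choose 2) + (n - 1) := by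
      calc ∑ v ∈ Finset.univ.erase v0, G.degree v
          ≤ ∑ v ∈ Finset.univ.erase v0, ((G.degree v).choose 2 + 1) := by
            refine Finset.sum_le_sum fun v _ => ?_
            have := choose_two_ge_sub_one (G.degree v)
            omega
        _ = (∑ v ∈ Finset.univ.erase v0, (G.degree v).choose 2) + (n - 1) := by
            rw [Finset.sum_add_distrib, Finset.sum_const, smul_eq_mul, mul_one,
              Finset.card_erase_of_mem (Finset.mem_univ v0), Finset.card_univ, hcard]
    have hd0 := choose_two_ge_self hv0
    omega
  · push_neg at hbig
    exfalso
    obtain ⟨a, b, c, hab, hac, hbc, hAab, hAac, hAbc⟩ := exists_triangle hclique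
    have hnbr : ∀ x y z : V, y ≠ z → G.Adj x y → G.Adj x z →
        G.neighborFinset x = {y, z} := by
      intro x y z hyz hxy hxz
      have hsub : ({y, z} : Finset V) ⊆ G.neighborFinset x := by
        intro w hw
        rcases Finset.mem_insert.mp hw with rfl | hw
        · exact (G.mem_neighborFinset x w).mpr hxy
        · rw [Finset.mem_singleton] at hw; subst hw
          exact (G.mem_neighborFinset x w).mpr hxz
      have hcard2 : ({y, z} : Finset V).card = 2 := by
        rw [Finset.card_insert_of_notMem (by simp [hyz]), Finset.card_singleton]
      refine (Finset.eq_of_subset_of_card_le hsub ?_).symm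
      rw [hcard2, SimpleGraph.card_neighborFinset_eq_degree]
      have := hbig x
      omega
    have hna := hnbr a b c hbc hAab hAac
    have hnb := hnbr b a c hac hAab.symm hAbc
    have hnc := hnbr c a b hab hAac.symm hAbc.symm
    have hclosed : ∀ u w : V, G.Adj u w → (u = a ∨ u = b ∨ u = c) →
        (w = a ∨ w = b ∨ w = c) := by
      intro u w huw hu
      rcases hu with rfl | rfl | rfl
      · have : w ∈ G.neighborFinset u := (G.mem_neighborFinset _ _).mpr huw
        rw [hna] at this
        simp at this
        tauto
      · have : w ∈ G.neighborFinset u := (G.mem_neighborFinset _ _).mpr huw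
        rw [hnb] at this
        simp at this
        tauto
      · have : w ∈ G.neighborFinset u := (G.mem_neighborFinset _ _).mpr huw
        rw [hnc] at this
        simp at this
        tauto
    have hreach : ∀ (u w : V), G.Walk u w → (u = a ∨ u = b ∨ u = c) →
        (w = a ∨ w = b ∨ w = c) := by
      intro u w p
      induction p with
      | nil => exact id
      | cons h q ih => exact fun hu => ih (hclosed _ _ h hu)
    have hall : ∀ w : V, w = a ∨ w = b ∨ w = c := by
      intro w
      obtain ⟨p⟩ := hconn a w
      exact hreach a w p (Or.inl rfl)
    have huniv : (Finset.univ : Finset V) ⊆ {a, b, c} := by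
      intro w _
      simp only [Finset.mem_insert, Finset.mem_singleton]
      exact hall w
    have := Finset.card_le_card huniv
    rw [Finset.card_univ, hcard] at this
    have h3 : ({a, b, c} : Finset V).card ≤ 3 := by
      apply le_trans (Finset.card_insert_le _ _)
      apply Nat.succ_le_succ
      apply le_trans (Finset.card_insert_le _ _)
      simp
    omega

end LB

/-- For `n ≥ 4`: `Ki(n,3)` has exactly `n` edges (copies of `P₂`),
`n+1` copies of `P₃` and `1` triangle, and every connected `n`-vertex graph with clique
number `3` has at least `n` copies of `P₂`, at least `n+1` copies of `P₃` and at least one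
triangle. -/
theorem kiteGraph_three_minimizes_small_subgraphs {n : ℕ} (hn : 4 ≤ n) :
    _root_.copyCount (pathGraph 2) (kiteGraph n 3) = n ∧
    _root_.copyCount (pathGraph 3) (kiteGraph n 3) = n + 1 ∧
    _root_.copyCount (⊤ : SimpleGraph (Fin 3)) (kiteGraph n 3) = 1 ∧
    ∀ {V : Type*} [Fintype V] (G : SimpleGraph V), Fintype.card V = n → G.Connected →
      G.cliqueNum = 3 →
        n ≤ _root_.copyCount (pathGraph 2) G ∧
        n + 1 ≤ _root_.copyCount (pathGraph 3) G ∧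
        1 ≤ _root_.copyCount (⊤ : SimpleGraph (Fin 3)) G := by
  refine ⟨?_, ?_, ?_, ?_⟩
  · rw [copyCount_pathGraph_two]
    exact kite_edge_card hn
  · rw [copyCount_pathGraph_three]
    exact kite_cherries hn
  · rw [copyCount_top_three]
    have key : ∀ s : Finset (Fin n), (kiteGraph n 3).IsNClique 3 s ↔
        s = {⟨0, by omega⟩, ⟨1, by omega⟩, ⟨2, by omega⟩} := by
      intro s
      rw [← SimpleGraph.mem_cliqueFinset_iff, kite_cliqueFinset hn, Finset.mem_singleton]
    rw [Nat.card_eq_one_iff_unique]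
    constructor
    · constructor
      rintro ⟨s, hs⟩ ⟨s', hs'⟩
      apply Subtype.ext
      show s = s'
      rw [(key s).mp hs, (key s').mp hs']
    · exact ⟨⟨_, (key _).mpr rfl⟩⟩
  · intro V _ G hcard hconn hclique
    refine ⟨?_, ?_, ?_⟩
    · rw [copyCount_pathGraph_two]
      exact edge_lower_bound hn hcard hconn hclique
    · rw [copyCount_pathGraph_three]
      exact cherry_lower_bound hn hcard hconn hclique
    · rw [copyCount_top_three]
      exact triangle_card_pos hclique
end

section
/- If G₀ is a connected graph on n−1 ≥ 3 vertices that is not a star, and G is obtained from G₀ by adding a new vertex adjacent to exactly one vertex of G₀, then G contains strictly more copies of P₂, of P₃, and of P₄ than G₀: N(P₂,G) ≥ N(P₂,G₀)+1, N(P₃,G) ≥ N(P₃,G₀)+1, and N(P₄,G) ≥ N(P₄,G₀)+1. -/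
open SimpleGraph Finset

attribute [local instance] Classical.propDecidable

/-- The graph obtained from `G₀` by adding one new vertex (`none`) adjacent to exactly the
vertex `v₀` of `G₀`. -/
def addLeaf {V : Type*} (G₀ : SimpleGraph V) (v₀ : V) : SimpleGraph (Option V) :=
  SimpleGraph.fromRel (fun a b =>
    match a, b with
    | some a, some b => G₀.Adj a b
    | some a, none => a = v₀
    | none, _ => False)

namespace AddLeafAux

instance subgraphFinite {A : Type*} [Finite A] (G : SimpleGraph A) : Finite G.Subgraph :=
  Finite.of_injective (fun H : G.Subgraph => (H.verts, H.Adj))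
    (fun H K h =>
      SimpleGraph.Subgraph.ext (congrArg Prod.fst h) (congrArg Prod.snd h))

variable {A B : Type*} {G : SimpleGraph A} {G' : SimpleGraph B}

/-- The coe of a mapped subgraph along an injective hom is isomorphic to the coe. -/
noncomputable def mapCoeIso (f : G →g G') (hf : Function.Injective f) (H : G.Subgraph) :
    H.coe ≃g (H.map f).coe where
  toEquiv := (Equiv.Set.image f H.verts hf).trans
    (Equiv.setCongr (SimpleGraph.Subgraph.map_verts f H).symm)
  map_rel_iff' := by
    rintro ⟨a, ha⟩ ⟨b, hb⟩
    show (H.map f).Adj (f a) (f b) ↔ H.Adj a b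
    constructor
    · rintro ⟨x, y, hxy, hx, hy⟩
      rwa [hf hx, hf hy] at hxy
    · intro h
      exact ⟨a, b, h, rfl, rfl⟩

theorem subgraphMap_injective (f : G →g G') (hf : Function.Injective f) :
    Function.Injective (SimpleGraph.Subgraph.map f) := by
  have key : ∀ H K : G.Subgraph, H.map f = K.map f → ∀ a b, H.Adj a b → K.Adj a b := by
    intro H K h a b hab
    have h1 : (H.map f).Adj (f a) (f b) := ⟨a, b, hab, rfl, rfl⟩
    rw [h] at h1
    obtain ⟨x, y, hxy, hx, hy⟩ := h1
    rwa [hf hx, hf hy] at hxy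
  intro H K h
  apply SimpleGraph.Subgraph.ext
  · have hv : f '' H.verts = f '' K.verts := by
      rw [← SimpleGraph.Subgraph.map_verts f H, ← SimpleGraph.Subgraph.map_verts f K, h]
    exact Set.image_injective.mpr hf hv
  · ext a b
    exact ⟨key H K h a b, key K H h.symm a b⟩

theorem card_add_one_le {α β : Type*} [Finite β] (f : α → β) (hf : Function.Injective f)
    (b : β) (hb : ∀ a, f a ≠ b) : Nat.card α + 1 ≤ Nat.card β := by
  have : Finite α := Finite.of_injective f hf
  have hg : Function.Injective (fun o : Option α => o.elim b f) := by
    rintro (_ | x) (_ | y) h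
    · rfl
    · exact absurd h.symm (hb y)
    · exact absurd h (hb x)
    · exact congrArg some (hf h)
  have := Nat.card_le_card_of_injective _ hg
  rwa [Finite.card_option] at this

variable {V : Type*} {G₀ : SimpleGraph V} {v₀ : V}

theorem addLeaf_adj_some_some {a b : V} :
    (addLeaf G₀ v₀).Adj (some a) (some b) ↔ G₀.Adj a b := by
  rw [addLeaf, fromRel_adj]
  constructor
  · rintro ⟨-, h | h⟩
    · exact h
    · exact h.symm
  · intro h
    exact ⟨by simpa using h.ne, Or.inl h⟩

theorem addLeaf_adj_none_v₀ : (addLeaf G₀ v₀).Adj none (some v₀) := by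
  rw [addLeaf, fromRel_adj]
  exact ⟨by simp, Or.inr rfl⟩

/-- The embedding hom from `G₀` into `addLeaf G₀ v₀`. -/
def homSome (G₀ : SimpleGraph V) (v₀ : V) : G₀ →g addLeaf G₀ v₀ where
  toFun := some
  map_rel' := fun h => addLeaf_adj_some_some.mpr h

/-- The key counting step: an injective copy of `pathGraph n` hitting `none` gives the
inequality. -/
theorem step [Fintype V] {n : ℕ} (g : pathGraph n →g addLeaf G₀ v₀)
    (hg : Function.Injective g) (i : Fin n) (hi : g i = none) :
    _root_.copyCount (pathGraph n) G₀ + 1 ≤ _root_.copyCount (pathGraph n) (addLeaf G₀ v₀) := by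
  classical
  have hsome : Function.Injective (homSome G₀ v₀ : V → Option V) :=
    Option.some_injective V
  set Φ : {H : G₀.Subgraph // Nonempty (H.coe ≃g pathGraph n)} →
      {H : (addLeaf G₀ v₀).Subgraph // Nonempty (H.coe ≃g pathGraph n)} :=
    fun p => ⟨p.1.map (homSome G₀ v₀),
      p.2.elim fun e => ⟨((mapCoeIso (homSome G₀ v₀) hsome p.1).symm).trans e⟩⟩ with hΦ
  have hΦinj : Function.Injective Φ := by
    intro p q h
    have := congrArg Subtype.val h
    exact Subtype.ext (subgraphMap_injective (homSome G₀ v₀) hsome this)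
  set b : {H : (addLeaf G₀ v₀).Subgraph // Nonempty (H.coe ≃g pathGraph n)} :=
    ⟨(⊤ : (pathGraph n).Subgraph).map g,
      ⟨((mapCoeIso g hg ⊤).symm).trans SimpleGraph.Subgraph.topIso⟩⟩ with hb
  have hnone : (none : Option V) ∈ ((⊤ : (pathGraph n).Subgraph).map g).verts := by
    rw [SimpleGraph.Subgraph.map_verts]
    exact ⟨i, trivial, hi⟩
  have hbne : ∀ p, Φ p ≠ b := by
    intro p h
    have hv := congrArg (fun q => (Subtype.val q).verts) h
    rw [hΦ] at hv
    simp only at hv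
    rw [SimpleGraph.Subgraph.map_verts] at hv
    have : (none : Option V) ∈ (homSome G₀ v₀) '' p.1.verts := by
      rw [hv]; exact hnone
    obtain ⟨z, -, hz⟩ := this
    exact Option.some_ne_none z hz
  exact card_add_one_le Φ hΦinj b hbne

end AddLeafAux

open AddLeafAux

/-- If `G₀` is a connected graph on at least `3` vertices which is not a
star, and `G` is obtained from `G₀` by attaching a pendant leaf, then `G` has strictly
more copies of `P₂`, of `P₃` and of `P₄` than `G₀`. -/
theorem addLeaf_copyCount_paths_strict {V : Type*} [Fintype V] (G₀ : SimpleGraph V)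
    (hcard : 3 ≤ Fintype.card V) (hconn : G₀.Connected)
    (hstar : ¬ ∃ m : ℕ, Nonempty (G₀ ≃g completeBipartiteGraph (Fin 1) (Fin m)))
    (v₀ : V) :
    _root_.copyCount (pathGraph 2) G₀ + 1 ≤ _root_.copyCount (pathGraph 2) (addLeaf G₀ v₀) ∧
    _root_.copyCount (pathGraph 3) G₀ + 1 ≤ _root_.copyCount (pathGraph 3) (addLeaf G₀ v₀) ∧
    _root_.copyCount (pathGraph 4) G₀ + 1 ≤ _root_.copyCount (pathGraph 4) (addLeaf G₀ v₀) := by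
  classical
  -- v₀ has a neighbour
  obtain ⟨w, hw⟩ : ∃ w : V, w ≠ v₀ := by
    have : Nontrivial V := Fintype.one_lt_card_iff_nontrivial.mp (by omega)
    exact exists_ne v₀
  obtain ⟨x, hx⟩ : ∃ x, G₀.Adj v₀ x := by
    obtain ⟨p⟩ := hconn.preconnected v₀ w
    cases p with
    | nil => exact absurd rfl hw.symm
    | cons h q => exact ⟨_, h⟩
  -- there is a path of length 2 from v₀
  obtain ⟨x', y', hx', hxy', hy'⟩ :
      ∃ x' y', G₀.Adj v₀ x' ∧ G₀.Adj x' y' ∧ y' ≠ v₀ := by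
    by_contra hcon
    push_neg at hcon
    have claim : ∀ (a c : V) (p : G₀.Walk a c),
        (∀ x y, G₀.Adj c x → G₀.Adj x y → y = c) → a = c ∨ G₀.Adj c a := by
      intro a c p
      induction p with
      | nil => exact fun _ => Or.inl rfl
      | cons h q ih =>
        intro hc
        rcases ih hc with rfl | hadj
        · exact Or.inr h.symm
        · exact Or.inl (hc _ _ hadj h.symm)
    have claim' : ∀ a : V, a = v₀ ∨ G₀.Adj v₀ a := fun a =>
      claim a v₀ (hconn.preconnected a v₀).some hcon
    apply hstar
    refine ⟨Fintype.card {w : V // w ≠ v₀}, ⟨?_⟩⟩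
    haveI : Unique {w : V // w = v₀} := ⟨⟨⟨v₀, rfl⟩⟩, fun a => Subtype.ext a.2⟩
    have e1 : {w : V // w = v₀} ≃ Fin 1 := Equiv.ofUnique _ _
    have e2 : {w : V // ¬ w = v₀} ≃ Fin (Fintype.card {w : V // w ≠ v₀}) :=
      Fintype.equivFin _
    refine ⟨((Equiv.sumCompl (· = v₀)).symm).trans (Equiv.sumCongr e1 e2), ?_⟩
    intro a b
    by_cases ha : a = v₀ <;> by_cases hb : b = v₀ <;>
      simp only [Equiv.trans_apply]
    · rw [Equiv.sumCompl_symm_apply_of_pos (p := (· = v₀)) ha,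
        Equiv.sumCompl_symm_apply_of_pos (p := (· = v₀)) hb]
      simp [ha, hb]
    · rw [Equiv.sumCompl_symm_apply_of_pos (p := (· = v₀)) ha,
        Equiv.sumCompl_symm_apply_of_neg (p := (· = v₀)) hb]
      simp only [Equiv.sumCongr_apply, Sum.map_inl, Sum.map_inr, completeBipartiteGraph_adj,
        Sum.isLeft_inl, Sum.isRight_inr, Sum.isRight_inl, Sum.isLeft_inr]
      constructor
      · intro _; rw [ha]; exact (claim' b).resolve_left hb
      · intro _; exact Or.inl ⟨trivial, trivial⟩
    · rw [Equiv.sumCompl_symm_apply_of_neg (p := (· = v₀)) ha,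
        Equiv.sumCompl_symm_apply_of_pos (p := (· = v₀)) hb]
      simp only [Equiv.sumCongr_apply, Sum.map_inl, Sum.map_inr, completeBipartiteGraph_adj,
        Sum.isLeft_inl, Sum.isRight_inr, Sum.isRight_inl, Sum.isLeft_inr]
      constructor
      · intro _; rw [hb]; exact ((claim' a).resolve_left ha).symm
      · intro _; exact Or.inr ⟨trivial, trivial⟩
    · rw [Equiv.sumCompl_symm_apply_of_neg (p := (· = v₀)) ha,
        Equiv.sumCompl_symm_apply_of_neg (p := (· = v₀)) hb]
      simp only [Equiv.sumCongr_apply, Sum.map_inr, completeBipartiteGraph_adj,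
        Sum.isLeft_inr, Sum.isRight_inr]
      constructor
      · rintro (⟨h, -⟩ | ⟨-, h⟩) <;> simp at h
      · intro hadj; exact absurd (hcon a b ((claim' a).resolve_left ha) hadj) hb
  -- case n = 2
  have step2 : _root_.copyCount (pathGraph 2) G₀ + 1 ≤ _root_.copyCount (pathGraph 2) (addLeaf G₀ v₀) := by
    have hmr : ∀ a b : Fin 2, (pathGraph 2).Adj a b →
        (addLeaf G₀ v₀).Adj (![none, some v₀] a) (![none, some v₀] b) := by
      intro a b hab
      rw [pathGraph_adj] at hab
      fin_cases a <;> fin_cases b <;> simp_all <;>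
        first
          | exact addLeaf_adj_none_v₀
          | exact addLeaf_adj_none_v₀.symm
    have hinj : Function.Injective ![none, (some v₀ : Option V)] := by
      intro a b hab
      fin_cases a <;> fin_cases b <;>
        first
          | rfl
          | (exfalso; revert hab; simp)
    exact step ⟨![none, some v₀], fun {a b} h => hmr a b h⟩ hinj 0 rfl
  -- case n = 3
  have step3 : _root_.copyCount (pathGraph 3) G₀ + 1 ≤ _root_.copyCount (pathGraph 3) (addLeaf G₀ v₀) := by
    have hmr : ∀ a b : Fin 3, (pathGraph 3).Adj a b →
        (addLeaf G₀ v₀).Adj (![none, some v₀, some x] a) (![none, some v₀, some x] b) := by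
      intro a b hab
      rw [pathGraph_adj] at hab
      fin_cases a <;> fin_cases b <;> simp_all <;>
        first
          | exact addLeaf_adj_none_v₀
          | exact addLeaf_adj_none_v₀.symm
          | exact addLeaf_adj_some_some.mpr hx
          | exact (addLeaf_adj_some_some.mpr hx).symm
    have hinj : Function.Injective ![none, some v₀, (some x : Option V)] := by
      intro a b hab
      fin_cases a <;> fin_cases b <;>
        first
          | rfl
          | (exfalso; revert hab; simp <;>
              first
                | exact hx.ne
                | exact hx.ne')
    exact step ⟨![none, some v₀, some x], fun {a b} h => hmr a b h⟩ hinj 0 rfl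
  -- case n = 4
  have step4 : _root_.copyCount (pathGraph 4) G₀ + 1 ≤ _root_.copyCount (pathGraph 4) (addLeaf G₀ v₀) := by
    have hmr : ∀ a b : Fin 4, (pathGraph 4).Adj a b →
        (addLeaf G₀ v₀).Adj (![none, some v₀, some x', some y'] a)
          (![none, some v₀, some x', some y'] b) := by
      intro a b hab
      rw [pathGraph_adj] at hab
      fin_cases a <;> fin_cases b <;> simp_all <;>
        first
          | exact addLeaf_adj_none_v₀
          | exact addLeaf_adj_none_v₀.symm
          | exact addLeaf_adj_some_some.mpr hx'
          | exact (addLeaf_adj_some_some.mpr hx').symm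
          | exact addLeaf_adj_some_some.mpr hxy'
          | exact (addLeaf_adj_some_some.mpr hxy').symm
    have hinj : Function.Injective ![none, some v₀, some x', (some y' : Option V)] := by
      intro a b hab
      fin_cases a <;> fin_cases b <;>
        first
          | rfl
          | (exfalso; revert hab; simp <;>
              first
                | exact hx'.ne
                | exact hx'.ne'
                | exact hxy'.ne
                | exact hxy'.ne'
                | exact hy'
                | exact fun h => hy' h.symm)
    exact step ⟨![none, some v₀, some x', some y'], fun {a b} h => hmr a b h⟩ hinj 0 rfl
  exact ⟨step2, step3, step4⟩
end

section
/- For any K₄-free graph G on n vertices and any triangle uvw of G, the number of ways to extend uvw to a copy of B₁(1,1) with uvw as the book's triangle is at most 2·binom(n−3,2) + a(uvw), where a(uvw) is the number of unordered pairs {x,y} of vertices outside the triangle such that x and y are each adjacent to exactly two triangle vertices and their pairs of triangle-neighbors are distinct. -/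
open SimpleGraph Finset

attribute [local instance] Classical.propDecidable

variable {V : Type*}

/-- The number of ordered pairs `(x, y)` of distinct vertices outside the triangle
`{u,v,w}` with `x` adjacent to `a` and `y` adjacent to `b`; for roots `a, b` of the
triangle this is the number of ways to complete the triangle to a copy of `B₁(1,1)` with
root edge `ab` (and the third triangle vertex as page). -/
noncomputable def extPairs (G : SimpleGraph V) (u v w a b : V) : ℕ :=
  Nat.card {xy : V × V // xy.1 ≠ xy.2 ∧ xy.1 ∉ ({u, v, w} : Set V) ∧
    xy.2 ∉ ({u, v, w} : Set V) ∧ G.Adj a xy.1 ∧ G.Adj b xy.2}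

/-- The total number of ways of extending the triangle `uvw` to a copy of `B₁(1,1)` whose
triangle is `uvw`: one of the three triangle edges is chosen as root edge and two further
vertices as the two leaves. -/
noncomputable def extCount (G : SimpleGraph V) (u v w : V) : ℕ :=
  extPairs G u v w v w + extPairs G u v w u w + extPairs G u v w u v

/-- `a(uvw)`: the number of unordered pairs `{x,y}` of distinct vertices outside the
triangle `{u,v,w}` such that `x` and `y` are each adjacent to exactly two triangle
vertices and their pairs of triangle-neighbours are distinct. -/
noncomputable def goodPairCount (G : SimpleGraph V) (u v w : V) : ℕ :=
  Nat.card {s : Sym2 V // ∃ x y : V, s = s(x, y) ∧ x ≠ y ∧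
    x ∉ ({u, v, w} : Set V) ∧ y ∉ ({u, v, w} : Set V) ∧
    {t ∈ ({u, v, w} : Set V) | G.Adj t x}.ncard = 2 ∧
    {t ∈ ({u, v, w} : Set V) | G.Adj t y}.ncard = 2 ∧
    {t ∈ ({u, v, w} : Set V) | G.Adj t x} ≠ {t ∈ ({u, v, w} : Set V) | G.Adj t y}}

private lemma core_ineq (pu pv pw qu qv qw : Prop)
    (hx : ¬(pu ∧ pv ∧ pw)) (hy : ¬(qu ∧ qv ∧ qw)) :
    ((if pv ∧ qw then 1 else 0) + (if pu ∧ qw then 1 else 0) + (if pu ∧ qv then 1 else 0)) +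
    ((if qv ∧ pw then 1 else 0) + (if qu ∧ pw then 1 else 0) + (if qu ∧ pv then 1 else 0)) ≤
    2 + (if (((pu ∧ pv ∧ ¬pw) ∨ (pu ∧ pw ∧ ¬pv) ∨ (pv ∧ pw ∧ ¬pu)) ∧
           ((qu ∧ qv ∧ ¬qw) ∨ (qu ∧ qw ∧ ¬qv) ∨ (qv ∧ qw ∧ ¬qu)) ∧
           ¬((pu ↔ qu) ∧ (pv ↔ qv) ∧ (pw ↔ qw))) then 1 else 0 : ℕ) := by
  by_cases pu <;> by_cases pv <;> by_cases pw <;> by_cases qu <;> by_cases qv <;> by_cases qw <;>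
    simp_all

private lemma extPairs_eq [Fintype V] (G : SimpleGraph V) (u v w a b : V) :
    extPairs G u v w a b =
      ∑ xy ∈ Finset.univ.filter (fun xy : V × V => xy.1 ≠ xy.2 ∧
          xy.1 ∉ ({u, v, w} : Set V) ∧ xy.2 ∉ ({u, v, w} : Set V)),
        (if G.Adj a xy.1 ∧ G.Adj b xy.2 then 1 else 0) := by
  rw [extPairs, Nat.card_eq_fintype_card, Fintype.card_subtype, Finset.sum_filter,
    Finset.card_filter]
  apply Finset.sum_congr rfl
  intro xy _
  split_ifs <;> tauto

/-- Adjacent to all three triangle vertices is impossible in a `K₄`-free graph. -/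
private lemma no_three (G : SimpleGraph V) (hG : G.CliqueFree 4) {u v w : V}
    (huv : G.Adj u v) (huw : G.Adj u w) (hvw : G.Adj v w) (x : V) :
    ¬(G.Adj u x ∧ G.Adj v x ∧ G.Adj w x) := by
  rintro ⟨h1, h2, h3⟩
  have h3c : G.IsNClique 3 ({u, v, w} : Finset V) :=
    is3Clique_triple_iff.mpr ⟨huv, huw, hvw⟩
  have h4 : G.IsNClique 4 (insert x ({u, v, w} : Finset V)) := by
    apply h3c.insert
    intro b hb
    simp only [Finset.mem_insert, Finset.mem_singleton] at hb
    rcases hb with rfl | rfl | rfl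
    · exact h1.symm
    · exact h2.symm
    · exact h3.symm
  exact hG _ h4

private lemma formula_ncard {u v w x : V} (huv : u ≠ v) (huw : u ≠ w) (hvw : v ≠ w)
    (G : SimpleGraph V)
    (h : (G.Adj u x ∧ G.Adj v x ∧ ¬G.Adj w x) ∨ (G.Adj u x ∧ G.Adj w x ∧ ¬G.Adj v x) ∨
      (G.Adj v x ∧ G.Adj w x ∧ ¬G.Adj u x)) :
    {t ∈ ({u, v, w} : Set V) | G.Adj t x}.ncard = 2 := by
  rcases h with ⟨h1, h2, h3⟩ | ⟨h1, h2, h3⟩ | ⟨h1, h2, h3⟩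
  · have : {t ∈ ({u, v, w} : Set V) | G.Adj t x} = {u, v} := by
      ext t
      simp only [Set.mem_setOf_eq, Set.mem_insert_iff, Set.mem_singleton_iff]
      constructor
      · rintro ⟨rfl | rfl | rfl, ht⟩ <;> tauto
      · rintro (rfl | rfl) <;> tauto
    rw [this, Set.ncard_pair huv]
  · have : {t ∈ ({u, v, w} : Set V) | G.Adj t x} = {u, w} := by
      ext t
      simp only [Set.mem_setOf_eq, Set.mem_insert_iff, Set.mem_singleton_iff]
      constructor
      · rintro ⟨rfl | rfl | rfl, ht⟩ <;> tauto
      · rintro (rfl | rfl) <;> tauto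
    rw [this, Set.ncard_pair huw]
  · have : {t ∈ ({u, v, w} : Set V) | G.Adj t x} = {v, w} := by
      ext t
      simp only [Set.mem_setOf_eq, Set.mem_insert_iff, Set.mem_singleton_iff]
      constructor
      · rintro ⟨rfl | rfl | rfl, ht⟩ <;> tauto
      · rintro (rfl | rfl) <;> tauto
    rw [this, Set.ncard_pair hvw]

private lemma formula_ne {u v w x y : V} (G : SimpleGraph V)
    (h : ¬((G.Adj u x ↔ G.Adj u y) ∧ (G.Adj v x ↔ G.Adj v y) ∧ (G.Adj w x ↔ G.Adj w y))) :
    {t ∈ ({u, v, w} : Set V) | G.Adj t x} ≠ {t ∈ ({u, v, w} : Set V) | G.Adj t y} := by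
  intro heq
  apply h
  have key : ∀ t, t ∈ ({u, v, w} : Set V) → (G.Adj t x ↔ G.Adj t y) := by
    intro t ht
    constructor
    · intro hx
      have : t ∈ {t ∈ ({u, v, w} : Set V) | G.Adj t x} := ⟨ht, hx⟩
      rw [heq] at this
      exact this.2
    · intro hy
      have : t ∈ {t ∈ ({u, v, w} : Set V) | G.Adj t y} := ⟨ht, hy⟩
      rw [← heq] at this
      exact this.2
  exact ⟨key u (by simp), key v (by simp), key w (by simp)⟩

private lemma two_mul_choose_two (m : ℕ) : 2 * m.choose 2 = m * m - m := by
  induction m with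
  | zero => rfl
  | succ k ih =>
    rw [Nat.choose_succ_succ, Nat.choose_one_right]
    have hk : (k + 1) * (k + 1) = k * k + 2 * k + 1 := by ring
    have h21 : k.choose (Nat.succ 1) = k.choose 2 := rfl
    have hsub : (k + 1) * (k + 1) - (k + 1) = k * k + k := by rw [hk]; omega
    have hle : k ≤ k * k := by nlinarith
    omega

/-- In a `K₄`-free graph `G` on `n` vertices, any triangle `uvw` can be
extended to a copy of `B₁(1,1)` (with `uvw` as the book's triangle) in at most
`2·C(n−3,2) + a(uvw)` ways. -/
theorem extCount_le [Fintype V] (G : SimpleGraph V) (hG : G.CliqueFree 4)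
    (u v w : V) (huv : G.Adj u v) (huw : G.Adj u w) (hvw : G.Adj v w) :
    extCount G u v w ≤ 2 * (Fintype.card V - 3).choose 2 + goodPairCount G u v w := by
  have huv' : u ≠ v := huv.ne
  have huw' : u ≠ w := huw.ne
  have hvw' : v ≠ w := hvw.ne
  set T : Set V := {u, v, w} with hT
  set P : Finset (V × V) := Finset.univ.filter (fun xy : V × V => xy.1 ≠ xy.2 ∧
      xy.1 ∉ T ∧ xy.2 ∉ T) with hP
  set g : V × V → ℕ := fun xy =>
    (if G.Adj v xy.1 ∧ G.Adj w xy.2 then 1 else 0) +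
    (if G.Adj u xy.1 ∧ G.Adj w xy.2 then 1 else 0) +
    (if G.Adj u xy.1 ∧ G.Adj v xy.2 then 1 else 0) with hg
  set good : V × V → Prop := fun xy =>
    {t ∈ T | G.Adj t xy.1}.ncard = 2 ∧ {t ∈ T | G.Adj t xy.2}.ncard = 2 ∧
    {t ∈ T | G.Adj t xy.1} ≠ {t ∈ T | G.Adj t xy.2} with hgood
  -- Step 1: extCount as a sum over P
  have h1 : extCount G u v w = ∑ xy ∈ P, g xy := by
    rw [extCount, extPairs_eq, extPairs_eq, extPairs_eq, ← Finset.sum_add_distrib,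
      ← Finset.sum_add_distrib]
  -- Step 2: swap invariance
  have h2 : ∑ xy ∈ P, g xy = ∑ xy ∈ P, g xy.swap := by
    apply Finset.sum_nbij' (fun xy => xy.swap) (fun xy => xy.swap)
    · intro a ha
      simp only [hP, Finset.mem_filter, Finset.mem_univ, true_and] at ha ⊢
      exact ⟨ha.1.symm, ha.2.2, ha.2.1⟩
    · intro a ha
      simp only [hP, Finset.mem_filter, Finset.mem_univ, true_and] at ha ⊢
      exact ⟨ha.1.symm, ha.2.2, ha.2.1⟩
    · intro a _; rfl
    · intro a _; rfl
    · intro a _; rfl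
  -- Step 3: pointwise bound
  have h3 : ∀ xy ∈ P, g xy + g xy.swap ≤ 2 + (if good xy then 1 else 0) := by
    intro xy _
    have key : (if (((G.Adj u xy.1 ∧ G.Adj v xy.1 ∧ ¬G.Adj w xy.1) ∨
          (G.Adj u xy.1 ∧ G.Adj w xy.1 ∧ ¬G.Adj v xy.1) ∨
          (G.Adj v xy.1 ∧ G.Adj w xy.1 ∧ ¬G.Adj u xy.1)) ∧
        ((G.Adj u xy.2 ∧ G.Adj v xy.2 ∧ ¬G.Adj w xy.2) ∨
          (G.Adj u xy.2 ∧ G.Adj w xy.2 ∧ ¬G.Adj v xy.2) ∨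
          (G.Adj v xy.2 ∧ G.Adj w xy.2 ∧ ¬G.Adj u xy.2)) ∧
        ¬((G.Adj u xy.1 ↔ G.Adj u xy.2) ∧ (G.Adj v xy.1 ↔ G.Adj v xy.2) ∧
          (G.Adj w xy.1 ↔ G.Adj w xy.2))) then 1 else 0 : ℕ) ≤
        (if good xy then 1 else 0) := by
      split_ifs with hf hg2
      · exact le_rfl
      · exfalso
        obtain ⟨f1, f2, f3⟩ := hf
        exact hg2 ⟨formula_ncard huv' huw' hvw' G f1, formula_ncard huv' huw' hvw' G f2,
          formula_ne G f3⟩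
      · exact Nat.zero_le _
      · exact le_rfl
    calc g xy + g xy.swap ≤ 2 + _ :=
          core_ineq (G.Adj u xy.1) (G.Adj v xy.1) (G.Adj w xy.1)
            (G.Adj u xy.2) (G.Adj v xy.2) (G.Adj w xy.2)
            (no_three G hG huv huw hvw xy.1) (no_three G hG huv huw hvw xy.2)
      _ ≤ 2 + (if good xy then 1 else 0) := by exact Nat.add_le_add_left key 2
  -- Step 4: sum of the bound
  have h4 : ∑ xy ∈ P, (2 + (if good xy then 1 else 0)) =
      2 * P.card + (P.filter good).card := by
    rw [Finset.sum_add_distrib, Finset.sum_const, smul_eq_mul, ← Finset.card_filter,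
      Nat.mul_comm]
  -- Step 5: cardinality of P
  have hTcard : ({u, v, w} : Finset V).card = 3 := by
    rw [Finset.card_insert_of_notMem (by simp [huv', huw']),
      Finset.card_insert_of_notMem (by simp [hvw']), Finset.card_singleton]
  have hPO : P = (({u, v, w} : Finset V)ᶜ).offDiag := by
    ext xy
    simp only [hP, Finset.mem_filter, Finset.mem_univ, true_and, Finset.mem_offDiag,
      Finset.mem_compl, Finset.mem_insert, Finset.mem_singleton, hT, Set.mem_insert_iff,
      Set.mem_singleton_iff]
    tauto
  set m : ℕ := Fintype.card V - 3 with hm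
  have hPcard : P.card = m * m - m := by
    rw [hPO, Finset.offDiag_card, Finset.card_compl, hTcard]
  -- Step 6: good pairs vs goodPairCount
  set Q : Finset (Sym2 V) := Finset.univ.filter (fun s : Sym2 V => ∃ x y : V, s = s(x, y) ∧
    x ≠ y ∧ x ∉ T ∧ y ∉ T ∧ {t ∈ T | G.Adj t x}.ncard = 2 ∧
    {t ∈ T | G.Adj t y}.ncard = 2 ∧
    {t ∈ T | G.Adj t x} ≠ {t ∈ T | G.Adj t y}) with hQ
  have hgpc : goodPairCount G u v w = Q.card := by
    rw [goodPairCount, Nat.card_eq_fintype_card, Fintype.card_subtype]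
  have h6 : (P.filter good).card = 2 * Q.card := by
    have hmap : ∀ xy ∈ P.filter good, s(xy.1, xy.2) ∈ Q := by
      intro xy hxy
      obtain ⟨hmem, hgd⟩ := Finset.mem_filter.mp hxy
      simp only [hP, Finset.mem_filter, Finset.mem_univ, true_and] at hmem
      simp only [hQ, Finset.mem_filter, Finset.mem_univ, true_and]
      exact ⟨xy.1, xy.2, rfl, hmem.1, hmem.2.1, hmem.2.2, hgd.1, hgd.2.1, hgd.2.2⟩
    have hfib2 : ∀ s ∈ Q,
        ((P.filter good).filter (fun xy : V × V => s(xy.1, xy.2) = s)).card = 2 := by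
      intro s hs
      obtain ⟨x, y, hsxy, hxy, hx, hy, n1, n2, nne⟩ := (Finset.mem_filter.mp hs).2
      have hfib : ((P.filter good).filter (fun xy : V × V => s(xy.1, xy.2) = s)) =
          {(x, y), (y, x)} := by
        ext ab
        simp only [Finset.mem_filter, Finset.mem_insert, Finset.mem_singleton, hsxy]
        constructor
        · rintro ⟨-, hab⟩
          rcases Sym2.eq_iff.mp hab with ⟨rfl, rfl⟩ | ⟨rfl, rfl⟩
          · left; rfl
          · right; rfl
        · rintro (rfl | rfl)
          · refine ⟨⟨?_, ?_⟩, rfl⟩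
            · simp only [hP, Finset.mem_filter, Finset.mem_univ, true_and]
              exact ⟨hxy, hx, hy⟩
            · exact ⟨n1, n2, nne⟩
          · refine ⟨⟨?_, ?_⟩, Sym2.eq_swap⟩
            · simp only [hP, Finset.mem_filter, Finset.mem_univ, true_and]
              exact ⟨hxy.symm, hy, hx⟩
            · exact ⟨n2, n1, nne.symm⟩
      rw [hfib, Finset.card_insert_of_notMem (by simp [hxy]), Finset.card_singleton]
    rw [Finset.card_eq_sum_card_fiberwise hmap, Finset.sum_congr rfl hfib2,
      Finset.sum_const, smul_eq_mul, Nat.mul_comm]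
  -- Final arithmetic
  have hchoose : 2 * m.choose 2 = m * m - m := two_mul_choose_two m
  have hdouble : 2 * extCount G u v w ≤ 2 * P.card + (P.filter good).card := by
    calc 2 * extCount G u v w = ∑ xy ∈ P, g xy + ∑ xy ∈ P, g xy.swap := by
          rw [h1, ← h2]; ring
      _ = ∑ xy ∈ P, (g xy + g xy.swap) := (Finset.sum_add_distrib).symm
      _ ≤ ∑ xy ∈ P, (2 + (if good xy then 1 else 0)) := Finset.sum_le_sum h3
      _ = 2 * P.card + (P.filter good).card := h4
  rw [hPcard, h6] at hdouble
  rw [hgpc]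
  omega
end
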